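/- arXiv:1802.06289 — 4 statements merged into one kernel-verified Lean document; each statement's English description precedes it below -/
import Mathlib

section
/- Let ‖·‖ be an arbitrary norm on ℝ^m and let v_1, …, v_n ∈ ℝ^m be vectors with ‖v_i‖ ≤ Δ for i = 1, …, n and v_1 + ⋯ + v_n = 0. Then there exists a permutation π of {1, …, n} such that for each k ∈ {1, …, n} the partial sum p_k = Σ_{i=1}^{k} v_{π(i)} satisfies ‖p_k‖ ≤ m·Δ. -/
/-!
Grinberg–Sevastyanov argument, for a seminorm `p` on a real vector space of dimension `d`.
Call `A ⊆ {1, …, n}` good if there are weights `μ ∈ [0, 1]^A` with `∑_A μᵢ = |A| - d` and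
`∑_A μᵢ vᵢ = 0`. Then `∑_A vᵢ = ∑_A (1 - μᵢ) vᵢ` with coefficients in `[0, 1]` summing to `d`,
so `p (∑_A vᵢ) ≤ d Δ`. The full index set is good (constant weights), and a good `A` with
`|A| > d` has a good subset `A \ {j}`: scale `μ` so that its total drops by one, and take an
extreme point of the polytope of such weights. Along a linear dependency of the vectors
`(1, vᵢ) ∈ ℝ × E` over its fractional coordinates it could be moved both ways, so there are at
most `d + 1` of them, and then the total `|A| - d - 1` forces a zero coordinate `j`.
Listing the indices in the reverse order of removal gives the permutation; prefixes with at
most `d` terms are bounded by the triangle inequality.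
-/

open Finset Module Filter Topology

theorem Fin.exists_perm_forall_map_Iic {n : ℕ} (Q : Finset (Fin n) → Prop) (huniv : Q univ)
    (herase : ∀ A, Q A → A.Nonempty → ∃ j ∈ A, Q (A.erase j)) :
    ∃ π : Equiv.Perm (Fin n), ∀ k, Q ((Iic k).map π.toEmbedding) := by
  induction n with
  | zero => exact ⟨1, fun k => k.elim0⟩
  | succ n ih =>
    obtain ⟨j, -, hj⟩ := herase univ huniv univ_nonempty
    rw [Fin.univ_succAbove n j, erase_cons] at hj
    obtain ⟨π', hπ'⟩ := ih (fun B => Q (B.map j.succAboveEmb)) hj fun B hB hne => by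
      obtain ⟨_, hb, hQ⟩ := herase _ hB hne.map
      obtain ⟨b, hbB, rfl⟩ := mem_map.1 hb
      exact ⟨b, hbB, by rwa [map_erase]⟩
    let π : Equiv.Perm (Fin (n + 1)) :=
      finSuccEquivLast.trans ((Equiv.optionCongr π').trans (finSuccEquiv' j).symm)
    refine ⟨π, Fin.lastCases ?_ fun k => ?_⟩
    · rwa [← Fin.top_eq_last, Iic_top, map_univ_equiv]
    · convert hπ' k using 1
      rw [← Fin.map_castSuccEmb_Iic, Finset.map_map, Finset.map_map]
      congr 1
      ext i
      simp [π]

namespace Steinitz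

variable {ι E : Type*} [AddCommGroup E] [Module ℝ E]

-- Coordinates outside `A` are confined to `[0, 1]` as well, so that the polytope is compact.
def weightPolytope (v : ι → E) (A : Finset ι) (s : ℝ) : Set (ι → ℝ) :=
  {μ | μ ∈ Set.Icc 0 1 ∧ ∑ i ∈ A, μ i = s ∧ ∑ i ∈ A, μ i • v i = 0}

def HasSteinitzWeights (v : ι → E) (A : Finset ι) : Prop :=
  (weightPolytope v A (#A - finrank ℝ E)).Nonempty

variable {v : ι → E} {A : Finset ι} {s : ℝ} {μ : ι → ℝ}

theorem smul_mem_weightPolytope (hμ : μ ∈ weightPolytope v A s) {c : ℝ} (hc : c ∈ Set.Icc 0 1) :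
    c • μ ∈ weightPolytope v A (c * s) := by
  obtain ⟨⟨h0, h1⟩, hsum, hvec⟩ := hμ
  refine ⟨⟨smul_nonneg hc.1 h0, fun i => ?_⟩, ?_, ?_⟩
  · simpa using mul_le_one₀ hc.2 (h0 i) (h1 i)
  · simp [← mul_sum, hsum]
  · simp [mul_smul, ← smul_sum, hvec]

theorem mem_weightPolytope_erase [DecidableEq ι] (hμ : μ ∈ weightPolytope v A s) {j : ι}
    (hj : μ j = 0) : μ ∈ weightPolytope v (A.erase j) s := by
  obtain ⟨hIcc, hsum, hvec⟩ := hμ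
  refine ⟨hIcc, ?_, ?_⟩
  · rwa [sum_erase _ hj]
  · rwa [sum_erase _ (by simp [hj])]

theorem isCompact_weightPolytope [Finite ι] (v : ι → E) (A : Finset ι) (s : ℝ) :
    IsCompact (weightPolytope v A s) := by
  let L : (ι → ℝ) →ₗ[ℝ] E := ∑ i ∈ A, (LinearMap.proj i).smulRight (v i)
  have hker : IsClosed {μ : ι → ℝ | ∑ i ∈ A, μ i • v i = 0} := by
    convert (LinearMap.ker L).closed_of_finiteDimensional using 1
    ext μ
    simp [L]
  exact isCompact_Icc.inter_right ((isClosed_eq (by fun_prop) continuous_const).inter hker)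

theorem eventually_add_smul_mem_Icc [Finite ι] {μ w : ι → ℝ} (hμ : μ ∈ Set.Icc 0 1)
    (hw : ∀ i, w i ≠ 0 → μ i ∈ Set.Ioo 0 1) : ∀ᶠ t in 𝓝 (0 : ℝ), μ + t • w ∈ Set.Icc 0 1 := by
  have hcoord (i : ι) : ∀ᶠ t in 𝓝 (0 : ℝ), μ i + t * w i ∈ Set.Icc 0 1 := by
    by_cases hwi : w i = 0
    · simpa [hwi] using And.intro (hμ.1 i) (hμ.2 i)
    · have hcont : Continuous fun t : ℝ => μ i + t * w i := by fun_prop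
      refine (hcont.continuousAt.eventually (isOpen_Ioo.mem_nhds ?_)).mono
        fun t ht => Set.Ioo_subset_Icc_self ht
      simpa using hw i hwi
  filter_upwards [eventually_all.2 hcoord] with t ht
  exact ⟨fun i => (ht i).1, fun i => (ht i).2⟩

theorem card_fractional_le_of_mem_extremePoints [FiniteDimensional ℝ E] [Finite ι]
    (hμ : μ ∈ (weightPolytope v A s).extremePoints ℝ) :
    #{i ∈ A | μ i ∈ Set.Ioo 0 1} ≤ finrank ℝ E + 1 := by
  classical
  set F := {i ∈ A | μ i ∈ Set.Ioo 0 1}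
  by_contra! hF
  have hdep : ¬ LinearIndepOn ℝ (fun i => ((1 : ℝ), v i)) (F : Set ι) := fun h => by
    have := h.fintype_card_le_finrank
    simp only [coe_sort_coe, Fintype.card_coe, finrank_prod, finrank_self] at this
    omega
  obtain ⟨g, hg, i₀, hi₀, hgi₀⟩ := not_linearIndepOn_finset_iff.1 hdep
  set w : ι → ℝ := fun i => if i ∈ F then g i else 0
  have hFA : F ⊆ A := filter_subset _ _
  have hw_sum : ∑ i ∈ A, w i = 0 := by
    simpa [w, sum_ite_mem, inter_eq_right.2 hFA, Prod.fst_sum] using congrArg Prod.fst hg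
  have hw_vec : ∑ i ∈ A, w i • v i = 0 := by
    simpa [w, ite_smul, sum_ite_mem, inter_eq_right.2 hFA, Prod.snd_sum] using congrArg Prod.snd hg
  have hmem (t : ℝ) (ht : μ + t • w ∈ Set.Icc 0 1) : μ + t • w ∈ weightPolytope v A s := by
    refine ⟨ht, ?_, ?_⟩
    · simp [sum_add_distrib, ← mul_sum, hw_sum, hμ.1.2.1]
    · simp [add_smul, sum_add_distrib, mul_smul, ← smul_sum, hw_vec, hμ.1.2.2]
  have hsmall := eventually_add_smul_mem_Icc (w := w) hμ.1.1 fun i hi => by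
    have : i ∈ F := by by_contra h; simp [w, h] at hi
    exact (mem_filter.1 this).2
  obtain ⟨ε, hε, hball⟩ := Metric.eventually_nhds_iff.1 hsmall
  have hplus := hmem (ε / 2) (hball (by simpa [abs_of_pos hε] using hε))
  have hminus := hmem (-(ε / 2)) (hball (by simpa [abs_of_pos hε] using hε))
  have hseg : μ ∈ openSegment ℝ (μ + (-(ε / 2)) • w) (μ + (ε / 2) • w) :=
    ⟨1 / 2, 1 / 2, by norm_num, by norm_num, by norm_num, by ext i; simp; ring⟩
  have hcollapse := congrFun (hμ.2 hminus hplus hseg) i₀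
  exact hgi₀ (by simpa [w, hi₀, hε.ne'] using hcollapse)

theorem card_sub_lt_sum_of_card_fractional_le {k : ℕ} (hμ : μ ∈ Set.Icc 0 1)
    (hA : ∀ i ∈ A, μ i ≠ 0) (hk : #{i ∈ A | μ i ∈ Set.Ioo 0 1} ≤ k + 1) :
    (#A : ℝ) - (k + 1) < ∑ i ∈ A, μ i := by
  classical
  set F := {i ∈ A | μ i ∈ Set.Ioo 0 1}
  have hone (i : ι) (hiA : i ∈ A) (hiF : i ∉ F) : 1 - μ i = 0 := by
    have hpos : 0 < μ i := lt_of_le_of_ne (hμ.1 i) (hA i hiA).symm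
    have : ¬ μ i < 1 := fun h => hiF (mem_filter.2 ⟨hiA, hpos, h⟩)
    linarith [show μ i ≤ 1 from hμ.2 i]
  have hdefect : ∑ i ∈ F, (1 - μ i) < k + 1 := by
    rcases F.eq_empty_or_nonempty with hF | hF
    · rw [hF, sum_empty]
      positivity
    · calc ∑ i ∈ F, (1 - μ i) < ∑ _i ∈ F, (1 : ℝ) :=
            sum_lt_sum_of_nonempty hF fun i hi => by linarith [(mem_filter.1 hi).2.1]
        _ ≤ k + 1 := by simpa using (Nat.cast_le (α := ℝ)).2 hk
  have hsplit : ∑ i ∈ A, (1 - μ i) = ∑ i ∈ F, (1 - μ i) :=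
    (sum_subset (filter_subset _ A) hone).symm
  rw [sum_sub_distrib, sum_const, nsmul_one] at hsplit
  linarith

theorem exists_mem_weightPolytope_eq_zero [FiniteDimensional ℝ E] [Finite ι]
    (hne : (weightPolytope v A (#A - (finrank ℝ E + 1))).Nonempty) :
    ∃ μ ∈ weightPolytope v A (#A - (finrank ℝ E + 1)), ∃ j ∈ A, μ j = 0 := by
  obtain ⟨μ, hμ⟩ := (isCompact_weightPolytope v A _).extremePoints_nonempty hne
  refine ⟨μ, hμ.1, ?_⟩
  by_contra! h
  exact (card_sub_lt_sum_of_card_fractional_le hμ.1.1 h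
    (card_fractional_le_of_mem_extremePoints hμ)).ne' hμ.1.2.1

theorem HasSteinitzWeights.exists_erase [FiniteDimensional ℝ E] [Finite ι] [DecidableEq ι]
    (h : HasSteinitzWeights v A) (hA : finrank ℝ E < #A) :
    ∃ j ∈ A, HasSteinitzWeights v (A.erase j) := by
  obtain ⟨μ, hμ⟩ := h
  set d := finrank ℝ E
  have hA' : (d : ℝ) + 1 ≤ #A := by exact_mod_cast hA
  have hscaled := smul_mem_weightPolytope hμ (c := (#A - (d + 1)) / (#A - d))
    ⟨div_nonneg (by linarith) (by linarith), (div_le_one (by linarith)).2 (by linarith)⟩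
  rw [div_mul_cancel₀ _ (by linarith)] at hscaled
  obtain ⟨μ', hμ', j, hj, hμ'j⟩ := exists_mem_weightPolytope_eq_zero ⟨_, hscaled⟩
  refine ⟨j, hj, μ', ?_⟩
  rw [card_erase_of_mem hj, Nat.cast_sub (card_pos.2 ⟨j, hj⟩)]
  convert mem_weightPolytope_erase hμ' hμ'j using 2
  push_cast
  ring

theorem hasSteinitzWeights_of_sum_eq_zero (hv : ∑ i ∈ A, v i = 0) (hA : finrank ℝ E ≤ #A) :
    HasSteinitzWeights v A := by
  have hA' : (finrank ℝ E : ℝ) ≤ #A := by exact_mod_cast hA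
  refine ⟨fun _ => (#A - finrank ℝ E) / #A, ⟨fun _ => ?_, fun _ => ?_⟩, ?_, ?_⟩
  · exact div_nonneg (by linarith) (by positivity)
  · exact div_le_one_of_le₀ (by linarith) (by positivity)
  · rcases (#A).eq_zero_or_pos with h | h
    · simp_all
    · rw [sum_const, nsmul_eq_mul, mul_div_cancel₀ _ (by positivity)]
  · rw [← smul_sum, hv, smul_zero]

theorem seminorm_sum_le_of_mem_weightPolytope (p : Seminorm ℝ E) {Δ : ℝ}
    (hμ : μ ∈ weightPolytope v A s) (hv : ∀ i ∈ A, p (v i) ≤ Δ) :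
    p (∑ i ∈ A, v i) ≤ (#A - s) * Δ := by
  obtain ⟨⟨-, hμ1⟩, hsum, hvec⟩ := hμ
  have hcoef (i : ι) : 0 ≤ 1 - μ i := sub_nonneg.2 (hμ1 i)
  have hcomplement : ∑ i ∈ A, v i = ∑ i ∈ A, (1 - μ i) • v i := by
    simp [sub_smul, sum_sub_distrib, hvec]
  calc p (∑ i ∈ A, v i) ≤ ∑ i ∈ A, p ((1 - μ i) • v i) :=
        hcomplement ▸ le_sum_of_subadditive p (map_zero p).le (map_add_le_add p) _ _
    _ = ∑ i ∈ A, (1 - μ i) * p (v i) := by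
        refine sum_congr rfl fun i _ => ?_
        rw [map_smul_eq_mul, Real.norm_of_nonneg (hcoef i)]
    _ ≤ ∑ i ∈ A, (1 - μ i) * Δ :=
        sum_le_sum fun i hi => mul_le_mul_of_nonneg_left (hv i hi) (hcoef i)
    _ = (#A - s) * Δ := by rw [← sum_mul, sum_sub_distrib, hsum, sum_const, nsmul_one]

theorem HasSteinitzWeights.seminorm_sum_le (h : HasSteinitzWeights v A) (p : Seminorm ℝ E)
    {Δ : ℝ} (hv : ∀ i ∈ A, p (v i) ≤ Δ) : p (∑ i ∈ A, v i) ≤ finrank ℝ E * Δ := by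
  obtain ⟨μ, hμ⟩ := h
  simpa using seminorm_sum_le_of_mem_weightPolytope p hμ hv

theorem exists_erase_of_imp_hasSteinitzWeights [FiniteDimensional ℝ E] [Finite ι]
    [DecidableEq ι] (hA : finrank ℝ E ≤ #A → HasSteinitzWeights v A) (hne : A.Nonempty) :
    ∃ j ∈ A, finrank ℝ E ≤ #(A.erase j) → HasSteinitzWeights v (A.erase j) := by
  by_cases hlt : finrank ℝ E < #A
  · obtain ⟨j, hj, h⟩ := (hA hlt.le).exists_erase hlt
    exact ⟨j, hj, fun _ => h⟩
  · obtain ⟨j, hj⟩ := hne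
    refine ⟨j, hj, fun h => absurd ?_ hlt⟩
    have := card_pos.2 ⟨j, hj⟩
    rw [card_erase_of_mem hj] at h
    omega

theorem seminorm_sum_le_of_imp_hasSteinitzWeights (p : Seminorm ℝ E) {Δ : ℝ} (hΔ : 0 ≤ Δ)
    (hA : finrank ℝ E ≤ #A → HasSteinitzWeights v A) (hv : ∀ i ∈ A, p (v i) ≤ Δ) :
    p (∑ i ∈ A, v i) ≤ finrank ℝ E * Δ := by
  by_cases hcard : finrank ℝ E ≤ #A
  · exact (hA hcard).seminorm_sum_le p hv
  calc p (∑ i ∈ A, v i)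
      _ ≤ ∑ i ∈ A, p (v i) := le_sum_of_subadditive p (map_zero p).le (map_add_le_add p) _ _
      _ ≤ #A • Δ := sum_le_card_nsmul _ _ _ hv
      _ ≤ finrank ℝ E * Δ := by
        rw [nsmul_eq_mul]
        gcongr
        exact_mod_cast (not_le.1 hcard).le

theorem exists_perm_seminorm_sum_Iic_le [FiniteDimensional ℝ E] {n : ℕ} (p : Seminorm ℝ E)
    {Δ : ℝ} {v : Fin n → E} (hv : ∀ i, p (v i) ≤ Δ) (hsum : ∑ i, v i = 0) :
    ∃ π : Equiv.Perm (Fin n), ∀ k, p (∑ i ∈ Iic k, v (π i)) ≤ finrank ℝ E * Δ := by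
  obtain ⟨π, hπ⟩ := Fin.exists_perm_forall_map_Iic
    (fun A => finrank ℝ E ≤ #A → HasSteinitzWeights v A)
    (hasSteinitzWeights_of_sum_eq_zero hsum) fun _ hA hne =>
      exists_erase_of_imp_hasSteinitzWeights hA hne
  refine ⟨π, fun k => ?_⟩
  simpa only [sum_map, Equiv.coe_toEmbedding] using
    seminorm_sum_le_of_imp_hasSteinitzWeights p ((apply_nonneg p _).trans (hv k)) (hπ k)
      fun i _ => hv i

end Steinitz

theorem steinitz_lemma_general (m n : ℕ) (N : (Fin m → ℝ) → ℝ)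
    (hN_smul : ∀ (c : ℝ) (x : Fin m → ℝ), N (c • x) = |c| * N x)
    (hN_add : ∀ x y : Fin m → ℝ, N (x + y) ≤ N x + N y)
    (Δ : ℝ) (v : Fin n → Fin m → ℝ)
    (hv : ∀ i, N (v i) ≤ Δ)
    (hsum : ∑ i, v i = 0) :
    ∃ π : Equiv.Perm (Fin n), ∀ k : Fin n,
      N (∑ i ∈ Finset.univ.filter (fun i => i ≤ k), v (π i)) ≤ (m : ℝ) * Δ := by
  let p : Seminorm ℝ (Fin m → ℝ) := Seminorm.of N hN_add fun c x => by simpa using hN_smul c x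
  obtain ⟨π, hπ⟩ := Steinitz.exists_perm_seminorm_sum_Iic_le p hv hsum
  refine ⟨π, fun k => ?_⟩
  have hk := hπ k
  rw [Module.finrank_fin_fun] at hk
  rwa [filter_ge_eq_Iic]

/-- **Steinitz Lemma.** For an arbitrary norm `N` on `ℝ^m` and vectors
`v 1, …, v n` with `N (v i) ≤ Δ` summing to zero, there is a reordering such
that every partial sum has norm at most `m * Δ`. -/
theorem steinitz_lemma (m n : ℕ) (N : (Fin m → ℝ) → ℝ)
    (hN_nonneg : ∀ x, 0 ≤ N x)
    (hN_eq_zero : ∀ x, N x = 0 ↔ x = 0)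
    (hN_smul : ∀ (c : ℝ) (x : Fin m → ℝ), N (c • x) = |c| * N x)
    (hN_add : ∀ x y : Fin m → ℝ, N (x + y) ≤ N x + N y)
    (Δ : ℝ) (v : Fin n → Fin m → ℝ)
    (hv : ∀ i, N (v i) ≤ Δ)
    (hsum : ∑ i, v i = 0) :
    ∃ π : Equiv.Perm (Fin n), ∀ k : Fin n,
      N (∑ i ∈ Finset.univ.filter (fun i => i ≤ k), v (π i)) ≤ (m : ℝ) * Δ :=
  steinitz_lemma_general m n N hN_smul hN_add Δ v hv hsum
end

section
/- Let A ∈ ℤ^{m×n} be an integer matrix, let Δ be an upper bound on the absolute value of each entry of A, and let y ∈ ℤ^n be an element of the Graver basis of A. Then ‖y‖₁ ≤ (2mΔ + 1)^m. -/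
/-- Two integer vectors are sign-compatible if they agree in sign componentwise. -/
def SignCompat {ι : Type*} (u v : ι → ℤ) : Prop := ∀ i, 0 ≤ u i * v i

/-- A cycle of an integer matrix `A` is an integer vector in its kernel. -/
def IsCycle {R C : Type*} [Fintype C] (A : Matrix R C ℤ) (y : C → ℤ) : Prop :=
  A.mulVec y = 0

/-- The Graver basis of `A` consists of the nonzero cycles of `A` that cannot be
written as the sum of two sign-compatible nonzero cycles of `A`. -/
def InGraverBasis {R C : Type*} [Fintype C] (A : Matrix R C ℤ) (y : C → ℤ) : Prop :=
  IsCycle A y ∧ y ≠ 0 ∧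
    ¬ ∃ u v : C → ℤ, IsCycle A u ∧ IsCycle A v ∧ u ≠ 0 ∧ v ≠ 0 ∧
      SignCompat u v ∧ y = u + v

/-!
Write `y` as a sum of `‖y‖₁` signed unit vectors `e_p`, which are pairwise sign-compatible. Their
images `A e_p` lie in `[-Δ, Δ]^m` and sum to `A y = 0`, so by the Steinitz lemma (in the `ℓ∞` form
of Grinberg and Sevastyanov) they can be ordered so that every prefix sum lies in the box
`[-mΔ, mΔ]^m`, which has `(2mΔ + 1)^m` points. If `‖y‖₁` were larger, two of the `‖y‖₁` nonempty
prefix sums would coincide; the block of unit vectors between them sums to a cycle `u`, and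
`y = u + (y - u)` would decompose `y` into two sign-compatible nonzero cycles.
-/

open Finset Matrix

theorem exists_affine_dependence {α ι 𝕜 : Type*} [DecidableEq α] [Fintype ι] [DivisionRing 𝕜]
    (v : α → ι → 𝕜) {F : Finset α} (hF : Fintype.card ι + 1 < #F) :
    ∃ μ : α → 𝕜, (∀ a ∉ F, μ a = 0) ∧ (∃ a ∈ F, μ a ≠ 0) ∧
      ∑ a ∈ F, μ a = 0 ∧ ∑ a ∈ F, μ a • v a = 0 := by
  have hdep : ¬ AffineIndependent 𝕜 fun a : F => v a := fun hind => by
    have := hind.card_le_finrank_succ.trans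
      (Nat.add_le_add_right (Submodule.finrank_le (vectorSpan 𝕜 _)) 1)
    simp only [Fintype.card_coe, Module.finrank_fintype_fun_eq_card] at this
    omega
  simp only [affineIndependent_iff_of_fintype, not_forall] at hdep
  obtain ⟨g, hg, hgv, a, ha⟩ := hdep
  rw [weightedVSub_eq_linear_combination _ hg] at hgv
  refine ⟨fun a => if h : a ∈ F then g ⟨a, h⟩ else 0, fun a ha => dif_neg ha,
    ⟨a, a.2, by simpa using ha⟩, ?_, ?_⟩
  · rw [← hg, ← sum_coe_sort F]
    simp
  · rw [← hgv, ← sum_coe_sort F]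
    simp

section Steinitz

variable {α ι 𝕜 : Type*} [Field 𝕜] [LinearOrder 𝕜]

/-- The time at which the ray `t ↦ x + t * μ`, `t ≥ 0`, leaves `[0, 1]`. -/
def exitTime (x μ : 𝕜) : 𝕜 := if 0 < μ then (1 - x) / μ else -x / μ

theorem add_exitTime_mul_eq_zero_or_one {x μ : 𝕜} (hμ : μ ≠ 0) :
    x + exitTime x μ * μ = 0 ∨ x + exitTime x μ * μ = 1 := by
  unfold exitTime
  split_ifs
  · right; field_simp; ring
  · left; field_simp; ring

/-- `w` is a point of the polytope through which Grinberg and Sevastyanov prove the Steinitz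
lemma: for `c = #s - m`, after rescaling to total `#s - (m + 1)` a vertex has a zero coordinate,
whose element is put last, because `∑ v a = ∑ (1 - w a) • v a` has sup norm at most `m * Δ`. -/
structure IsSteinitzWeight (v : α → ι → 𝕜) (s : Finset α) (c : 𝕜) (w : α → 𝕜) : Prop where
  mem_Icc : ∀ a ∈ s, w a ∈ Set.Icc 0 1
  sum_eq : ∑ a ∈ s, w a = c
  sum_smul_eq_zero : ∑ a ∈ s, w a • v a = 0

def fracCoords (s : Finset α) (w : α → 𝕜) : Finset α := s.filter fun a => w a ≠ 0 ∧ w a ≠ 1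

theorem IsSteinitzWeight.erase [DecidableEq α] {v : α → ι → 𝕜} {s : Finset α} {c : 𝕜}
    {w : α → 𝕜} (h : IsSteinitzWeight v s c w) {a : α} (ha : w a = 0) :
    IsSteinitzWeight v (s.erase a) c w where
  mem_Icc b hb := h.mem_Icc b (mem_of_mem_erase hb)
  sum_eq := by rw [sum_erase s ha, h.sum_eq]
  sum_smul_eq_zero := by rw [sum_erase s (by rw [ha, zero_smul]), h.sum_smul_eq_zero]

variable [IsStrictOrderedRing 𝕜]

theorem exitTime_nonneg {x : 𝕜} (μ : 𝕜) (hx : x ∈ Set.Icc 0 1) : 0 ≤ exitTime x μ := by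
  unfold exitTime
  split_ifs with hμ
  · exact div_nonneg (by linarith [hx.2]) hμ.le
  · exact div_nonneg_of_nonpos (by linarith [hx.1]) (not_lt.mp hμ)

theorem add_mul_mem_Icc_of_le_exitTime {x μ t : 𝕜} (hx : x ∈ Set.Icc 0 1) (ht₀ : 0 ≤ t)
    (ht : t ≤ exitTime x μ) : x + t * μ ∈ Set.Icc 0 1 := by
  unfold exitTime at ht
  split_ifs at ht with hμ
  · have := (le_div_iff₀ hμ).mp ht
    constructor <;> nlinarith [hx.1]
  · rcases (not_lt.mp hμ).lt_or_eq with hμ | rfl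
    · have := (le_div_iff_of_neg hμ).mp ht
      constructor <;> nlinarith [hx.2]
    · simpa using hx

theorem exists_add_mul_mem_Icc_eq_zero_or_one (s : Finset α) {w μ : α → 𝕜}
    (hw : ∀ a ∈ s, w a ∈ Set.Icc 0 1) (hμ : ∃ a ∈ s, μ a ≠ 0) :
    ∃ t : 𝕜, (∀ a ∈ s, w a + t * μ a ∈ Set.Icc 0 1) ∧
      ∃ b ∈ s, μ b ≠ 0 ∧ (w b + t * μ b = 0 ∨ w b + t * μ b = 1) := by
  obtain ⟨b, hb, hmin⟩ := (s.filter fun a => μ a ≠ 0).exists_min_image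
    (fun a => exitTime (w a) (μ a)) (by simpa [filter_nonempty_iff] using hμ)
  obtain ⟨hbs, hμb⟩ := mem_filter.mp hb
  refine ⟨exitTime (w b) (μ b), fun a ha => ?_, b, hbs, hμb, add_exitTime_mul_eq_zero_or_one hμb⟩
  by_cases hμa : μ a = 0
  · simpa [hμa] using hw a ha
  · exact add_mul_mem_Icc_of_le_exitTime (hw a ha) (exitTime_nonneg _ (hw b hbs))
      (hmin a (mem_filter.mpr ⟨ha, hμa⟩))

namespace IsSteinitzWeight

variable {v : α → ι → 𝕜} {s : Finset α} {c : 𝕜} {w : α → 𝕜}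

theorem smul (h : IsSteinitzWeight v s c w) {r : 𝕜} (hr : r ∈ Set.Icc 0 1) :
    IsSteinitzWeight v s (r * c) (r • w) where
  mem_Icc a ha := ⟨mul_nonneg hr.1 (h.mem_Icc a ha).1,
    mul_le_one₀ hr.2 (h.mem_Icc a ha).1 (h.mem_Icc a ha).2⟩
  sum_eq := by simp only [Pi.smul_apply, smul_eq_mul, ← mul_sum, h.sum_eq]
  sum_smul_eq_zero := by
    simp only [Pi.smul_apply, smul_assoc, ← smul_sum, h.sum_smul_eq_zero, smul_zero]

variable [Fintype ι]

theorem abs_sum_le (h : IsSteinitzWeight v s (#s - Fintype.card ι) w) {Δ : 𝕜}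
    (hv : ∀ a ∈ s, ∀ i, |v a i| ≤ Δ) (i : ι) : |∑ a ∈ s, v a i| ≤ Fintype.card ι * Δ := by
  have hwv : ∑ a ∈ s, w a * v a i = 0 := by
    simpa [Finset.sum_apply] using congrFun h.sum_smul_eq_zero i
  have hw1 : ∀ a ∈ s, 0 ≤ 1 - w a := fun a ha => sub_nonneg.mpr (h.mem_Icc a ha).2
  calc |∑ a ∈ s, v a i| = |∑ a ∈ s, (1 - w a) * v a i| := by
        simp only [sub_mul, one_mul, sum_sub_distrib, hwv, sub_zero]
    _ ≤ ∑ a ∈ s, (1 - w a) * Δ := (abs_sum_le_sum_abs _ _).trans <| sum_le_sum fun a ha => by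
        rw [abs_mul, abs_of_nonneg (hw1 a ha)]
        exact mul_le_mul_of_nonneg_left (hv a ha i) (hw1 a ha)
    _ = Fintype.card ι * Δ := by
        rw [← sum_mul, sum_sub_distrib, h.sum_eq, sum_const, nsmul_one]
        ring

variable [DecidableEq α]

theorem exists_card_fracCoords_lt (h : IsSteinitzWeight v s c w)
    (hF : Fintype.card ι + 1 < #(fracCoords s w)) :
    ∃ w', IsSteinitzWeight v s c w' ∧ #(fracCoords s w') < #(fracCoords s w) := by
  set F := fracCoords s w
  have hFs : F ⊆ s := filter_subset _ _
  obtain ⟨μ, hμF, ⟨a, haF, hμa⟩, hμsum, hμv⟩ := exists_affine_dependence v hF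
  have hμs : ∀ a ∈ s, a ∉ F → μ a = 0 := fun a _ => hμF a
  obtain ⟨t, ht, b, hbs, hμb, hb⟩ :=
    exists_add_mul_mem_Icc_eq_zero_or_one s h.mem_Icc ⟨a, hFs haF, hμa⟩
  refine ⟨fun a => w a + t * μ a, ⟨ht, ?_, ?_⟩, ?_⟩
  · rw [sum_add_distrib, ← mul_sum, ← sum_subset hFs hμs, hμsum, h.sum_eq, mul_zero, add_zero]
  · have hμvs : ∀ a ∈ s, a ∉ F → μ a • v a = 0 := fun a ha haF => by rw [hμs a ha haF, zero_smul]
    simp only [add_smul, mul_smul]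
    rw [sum_add_distrib, ← smul_sum, ← sum_subset hFs hμvs, hμv, h.sum_smul_eq_zero, smul_zero,
      add_zero]
  · have hbF : b ∈ F := by_contra fun hbF => hμb (hμF b hbF)
    refine (card_le_card fun a ha => ?_).trans_lt (card_erase_lt_of_mem hbF)
    obtain ⟨has, ha0, ha1⟩ := mem_filter.mp ha
    simp only at ha0 ha1
    refine mem_erase.mpr ⟨fun hab => ?_, by_contra fun haF => ?_⟩
    · subst hab; tauto
    · rw [hμF a haF, mul_zero, add_zero] at ha0 ha1
      exact haF (mem_filter.mpr ⟨has, ha0, ha1⟩)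

theorem exists_card_fracCoords_le (h : IsSteinitzWeight v s c w) :
    ∃ w', IsSteinitzWeight v s c w' ∧ #(fracCoords s w') ≤ Fintype.card ι + 1 := by
  induction hk : #(fracCoords s w) using Nat.strong_induction_on generalizing w with
  | _ k ih =>
    by_cases hsmall : k ≤ Fintype.card ι + 1
    · exact ⟨w, h, hk ▸ hsmall⟩
    obtain ⟨w', h', hlt⟩ := h.exists_card_fracCoords_lt (by omega)
    exact ih _ (hk ▸ hlt) h' rfl


theorem exists_eq_zero (h : IsSteinitzWeight v s (#s - (Fintype.card ι + 1)) w)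
    (hF : #(fracCoords s w) ≤ Fintype.card ι + 1) : ∃ a ∈ s, w a = 0 := by
  by_contra! hpos
  set F := fracCoords s w
  have hFs : F ⊆ s := filter_subset _ _
  have hones : ∀ a ∈ s \ F, w a = 1 := fun a ha => by
    obtain ⟨has, haF⟩ := mem_sdiff.mp ha
    by_contra ha1
    exact haF (mem_filter.mpr ⟨has, hpos a has, ha1⟩)
  have hFsum : (#F : 𝕜) - (Fintype.card ι + 1) < ∑ a ∈ F, w a := by
    rcases F.eq_empty_or_nonempty with hF0 | hFne
    · rw [hF0, card_empty, sum_empty, Nat.cast_zero]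
      linarith
    · have : 0 < ∑ a ∈ F, w a := sum_pos
        (fun a ha => lt_of_le_of_ne (h.mem_Icc a (hFs ha)).1 (hpos a (hFs ha)).symm) hFne
      have : (#F : 𝕜) ≤ Fintype.card ι + 1 := by exact_mod_cast hF
      linarith
  have hsplit : ∑ a ∈ s, w a = #(s \ F) + ∑ a ∈ F, w a := by
    rw [← sum_sdiff hFs, sum_congr rfl hones, sum_const, nsmul_one]
  have hcard : (#(s \ F) : 𝕜) + #F = #s := by exact_mod_cast card_sdiff_add_card_eq_card hFs
  linarith [h.sum_eq]

theorem exists_erase (h : IsSteinitzWeight v s (#s - Fintype.card ι) w)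
    (hs : Fintype.card ι < #s) :
    ∃ a ∈ s, ∃ w', IsSteinitzWeight v (s.erase a) (#(s.erase a) - Fintype.card ι) w' := by
  have hpos : (0 : 𝕜) < #s - Fintype.card ι := sub_pos.mpr (by exact_mod_cast hs)
  have hr : ((#s : 𝕜) - (Fintype.card ι + 1)) / (#s - Fintype.card ι) ∈ Set.Icc 0 1 :=
    ⟨div_nonneg (sub_nonneg.mpr (by exact_mod_cast hs)) hpos.le,
      (div_le_one hpos).mpr (by linarith)⟩
  have h' := h.smul hr
  rw [div_mul_cancel₀ _ hpos.ne'] at h'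
  obtain ⟨w', hw', hF⟩ := h'.exists_card_fracCoords_le
  obtain ⟨a, ha, hwa⟩ := hw'.exists_eq_zero hF
  refine ⟨a, ha, w', ?_⟩
  convert hw'.erase hwa using 1
  rw [card_erase_of_mem ha, Nat.cast_pred (card_pos.mpr ⟨a, ha⟩)]
  ring

end IsSteinitzWeight

theorem abs_sum_le_card_mul {f : α → 𝕜} {u : Finset α} {Δ : 𝕜} (hf : ∀ a ∈ u, |f a| ≤ Δ) :
    |∑ a ∈ u, f a| ≤ #u * Δ :=
  (abs_sum_le_sum_abs _ _).trans (by simpa using sum_le_card_nsmul u _ Δ hf)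

variable [Fintype ι] [DecidableEq α]

theorem exists_list_of_card_le (v : α → ι → 𝕜) {Δ : 𝕜} (hΔ : 0 ≤ Δ) {s : Finset α}
    (hv : ∀ a ∈ s, ∀ i, |v a i| ≤ Δ) (hs : #s ≤ Fintype.card ι) :
    ∃ l : List α, l.Nodup ∧ l.toFinset = s ∧
      ∀ t i, |∑ a ∈ (l.take t).toFinset, v a i| ≤ Fintype.card ι * Δ := by
  refine ⟨s.toList, s.nodup_toList, s.toList_toFinset, fun t i => ?_⟩
  have hsub : (s.toList.take t).toFinset ⊆ s := by
    intro a ha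
    exact mem_toList.mp (List.take_subset _ _ (List.mem_toFinset.mp ha))
  refine (abs_sum_le_card_mul fun a ha => hv a (hsub ha) i).trans ?_
  gcongr
  exact_mod_cast (card_le_card hsub).trans hs

theorem IsSteinitzWeight.exists_list {v : α → ι → 𝕜} {Δ : 𝕜} (hΔ : 0 ≤ Δ) {s : Finset α}
    (hv : ∀ a ∈ s, ∀ i, |v a i| ≤ Δ) {w : α → 𝕜}
    (h : IsSteinitzWeight v s (#s - Fintype.card ι) w) :
    ∃ l : List α, l.Nodup ∧ l.toFinset = s ∧
      ∀ t i, |∑ a ∈ (l.take t).toFinset, v a i| ≤ Fintype.card ι * Δ := by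
  induction s using Finset.strongInduction generalizing w with
  | H s ih =>
    by_cases hs : #s ≤ Fintype.card ι
    · exact exists_list_of_card_le v hΔ hv hs
    obtain ⟨a, ha, w', hw'⟩ := h.exists_erase (by omega)
    obtain ⟨l, hnd, hl, hpre⟩ :=
      ih _ (erase_ssubset ha) (fun b hb => hv b (mem_of_mem_erase hb)) hw'
    have hal : a ∉ l := by
      rw [← List.mem_toFinset, hl]
      exact notMem_erase a s
    have hls : (l ++ [a]).toFinset = s := by
      rw [List.toFinset_append, hl]
      simp [insert_erase ha]
    refine ⟨l ++ [a], List.concat_eq_append ▸ hnd.concat hal, hls, fun t i => ?_⟩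
    rcases le_or_gt t l.length with ht | ht
    · rw [List.take_append_of_le_length ht]
      exact hpre t i
    · rw [List.take_of_length_le (by simp; omega), hls]
      exact h.abs_sum_le hv i

theorem exists_list_abs_sum_take_le (v : α → ι → 𝕜) {Δ : 𝕜} (hΔ : 0 ≤ Δ) {s : Finset α}
    (hv : ∀ a ∈ s, ∀ i, |v a i| ≤ Δ) (hs : ∑ a ∈ s, v a = 0) :
    ∃ l : List α, l.Nodup ∧ l.toFinset = s ∧
      ∀ t i, |∑ a ∈ (l.take t).toFinset, v a i| ≤ Fintype.card ι * Δ := by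
  by_cases hsm : #s ≤ Fintype.card ι
  · exact exists_list_of_card_le v hΔ hv hsm
  have hpos : (0 : 𝕜) < #s := by exact_mod_cast (Nat.zero_lt_of_lt (not_le.mp hsm))
  have hr : ((#s : 𝕜) - Fintype.card ι) / #s ∈ Set.Icc 0 1 :=
    ⟨div_nonneg (sub_nonneg.mpr (by exact_mod_cast (not_le.mp hsm).le)) hpos.le,
      (div_le_one hpos).mpr (by linarith [(Nat.cast_nonneg (α := 𝕜) (Fintype.card ι))])⟩
  have h : IsSteinitzWeight v s #s 1 := ⟨by simp, by simp, by simpa using hs⟩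
  have h' := h.smul hr
  rw [div_mul_cancel₀ _ hpos.ne'] at h'
  exact h'.exists_list hΔ hv

end Steinitz

section Pigeonhole

variable {T : Type*} [Fintype T] [DecidableEq T]

theorem exists_sum_eq_zero_of_sum_take_eq {G : Type*} [AddCommGroup G] (v : T → G) {l : List T}
    (hnd : l.Nodup) (hl : l.toFinset = univ) {a b : ℕ} (ha : 0 < a) (hab : a < b)
    (hb : b ≤ l.length)
    (h : ∑ p ∈ (l.take a).toFinset, v p = ∑ p ∈ (l.take b).toFinset, v p) :
    ∃ s : Finset T, s.Nonempty ∧ s ≠ univ ∧ ∑ p ∈ s, v p = 0 := by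
  have hsub : (l.take a).toFinset ⊆ (l.take b).toFinset := fun p hp =>
    List.mem_toFinset.mpr (List.take_subset_take_left l hab.le (List.mem_toFinset.mp hp))
  have hcard : ∀ t ≤ l.length, #(l.take t).toFinset = t := fun t ht => by
    rw [List.toFinset_card_of_nodup (hnd.sublist (List.take_sublist t l)), List.length_take,
      min_eq_left ht]
  have hlen : #(univ : Finset T) = l.length := by rw [← hl, List.toFinset_card_of_nodup hnd]
  have hsd : #((l.take b).toFinset \ (l.take a).toFinset) = b - a := by
    rw [card_sdiff_of_subset hsub, hcard a (hab.le.trans hb), hcard b hb]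
  refine ⟨(l.take b).toFinset \ (l.take a).toFinset, card_pos.mp (by omega),
    fun hu => by rw [hu, hlen] at hsd; omega, ?_⟩
  rw [sum_sdiff_eq_sub hsub, h, sub_self]

theorem exists_sum_eq_zero_of_pow_lt_card {ι : Type*} [Fintype ι] (v : T → ι → ℤ) {Δ : ℤ}
    (hΔ : 0 ≤ Δ) (hv : ∀ p i, |v p i| ≤ Δ) (hsum : ∑ p, v p = 0)
    (hcard : (2 * Fintype.card ι * Δ + 1) ^ Fintype.card ι < Fintype.card T) :
    ∃ s : Finset T, s.Nonempty ∧ s ≠ univ ∧ ∑ p ∈ s, v p = 0 := by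
  classical
  obtain ⟨l, hnd, hl, hpre⟩ := exists_list_abs_sum_take_le (fun p i => (v p i : ℚ))
    (Δ := Δ) (by exact_mod_cast hΔ) (s := univ) (fun p _ i => by exact_mod_cast hv p i)
    (by ext i; simpa [Finset.sum_apply] using congr_arg (fun x : ℤ => (x : ℚ)) (congrFun hsum i))
  set M : ℤ := Fintype.card ι * Δ
  set P : ℕ → ι → ℤ := fun t => ∑ p ∈ (l.take t).toFinset, v p
  have hP : ∀ t, P t ∈ Icc (fun _ => -M) (fun _ => M) := fun t => by
    have : ∀ i, |P t i| ≤ M := fun i => by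
      have := hpre t i
      simp only [P, M, Finset.sum_apply]
      exact_mod_cast this
    simpa [Pi.le_def, abs_le, forall_and] using this
  have hbox : (#(Icc (fun _ : ι => -M) (fun _ => M)) : ℤ) =
      (2 * Fintype.card ι * Δ + 1) ^ Fintype.card ι := by
    rw [Pi.card_Icc]
    have hwidth : M + 1 - -M = 2 * Fintype.card ι * Δ + 1 := by ring
    simp only [Int.card_Icc, prod_const, card_univ, hwidth]
    rw [Nat.cast_pow, Int.toNat_of_nonneg (by positivity)]
  have hlen : l.length = Fintype.card T := by
    rw [← List.toFinset_card_of_nodup hnd, hl, card_univ]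
  obtain ⟨a, ha, b, hb, hne, hab⟩ := exists_ne_map_eq_of_card_lt_of_maps_to
    (s := Icc 1 l.length) (f := P) (by rw [Nat.card_Icc]; omega) fun t _ => hP t
  rw [mem_Icc] at ha hb
  rcases hne.lt_or_gt with hlt | hlt
  · exact exists_sum_eq_zero_of_sum_take_eq v hnd hl ha.1 hlt hb.2 hab
  · exact exists_sum_eq_zero_of_sum_take_eq v hnd hl hb.1 hlt ha.2 hab.symm

end Pigeonhole

section Graver

variable {T C : Type*}

theorem signCompat_sum_sum {w : T → C → ℤ} (hw : ∀ p q, SignCompat (w p) (w q))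
    (s t : Finset T) : SignCompat (∑ p ∈ s, w p) (∑ q ∈ t, w q) := fun i => by
  simp only [Finset.sum_apply, sum_mul_sum]
  exact sum_nonneg fun p _ => sum_nonneg fun q _ => hw p q i

theorem sum_ne_zero_of_signCompat {w : T → C → ℤ} (hw : ∀ p q, SignCompat (w p) (w q))
    (hw0 : ∀ p, w p ≠ 0) {s : Finset T} (hs : s.Nonempty) : ∑ p ∈ s, w p ≠ 0 := by
  obtain ⟨p, hp⟩ := hs
  obtain ⟨i, hi⟩ := Function.ne_iff.mp (hw0 p)
  intro h0
  have hle : w p i * w p i ≤ (∑ q ∈ s, w q i) * w p i := by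
    rw [sum_mul]
    exact single_le_sum (f := fun q => w q i * w p i) (fun q _ => hw q p i) hp
  rw [← Finset.sum_apply, h0] at hle
  exact absurd hle (by simpa using mul_self_pos.mpr hi)

theorem InGraverBasis.mulVec_sum_ne_zero {R : Type*} [Fintype T] [DecidableEq T] [Fintype C]
    {A : Matrix R C ℤ} {y : C → ℤ} (hy : InGraverBasis A y) {w : T → C → ℤ}
    (hwy : ∑ p, w p = y) (hw : ∀ p q, SignCompat (w p) (w q)) (hw0 : ∀ p, w p ≠ 0)
    {s : Finset T} (hs : s.Nonempty) (hsu : s ≠ univ) : A *ᵥ ∑ p ∈ s, w p ≠ 0 := fun hu => by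
  have hsum : ∑ p ∈ s, w p + ∑ p ∈ sᶜ, w p = y := by rw [sum_add_sum_compl, hwy]
  have hsc : sᶜ.Nonempty := by rwa [nonempty_iff_ne_empty, Ne, compl_eq_empty_iff]
  refine hy.2.2 ⟨_, _, hu, ?_, sum_ne_zero_of_signCompat hw hw0 hs,
    sum_ne_zero_of_signCompat hw hw0 hsc, signCompat_sum_sum hw s sᶜ, hsum.symm⟩
  rw [IsCycle, eq_sub_of_add_eq' hsum, mulVec_sub, hy.1, hu, sub_zero]

abbrev UnitStepIndex (y : C → ℤ) : Type _ := Σ j, Fin (y j).natAbs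

theorem card_unitStepIndex [Fintype C] (y : C → ℤ) :
    (Fintype.card (UnitStepIndex y) : ℤ) = ∑ j, |y j| := by
  simp [Fintype.card_sigma]

theorem UnitStepIndex.apply_fst_ne_zero {y : C → ℤ} (p : UnitStepIndex y) : y p.1 ≠ 0 :=
  fun h => by simpa [h] using p.2.pos

variable [DecidableEq C]

def unitStep (y : C → ℤ) (p : UnitStepIndex y) : C → ℤ := Pi.single p.1 (y p.1).sign

theorem sum_unitStep [Fintype C] (y : C → ℤ) : ∑ p, unitStep y p = y := by
  calc ∑ p, unitStep y p = ∑ j, ∑ _k : Fin (y j).natAbs, Pi.single j (y j).sign :=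
        Fintype.sum_sigma _
    _ = ∑ j, Pi.single j (y j) := by
        refine sum_congr rfl fun j _ => ?_
        rw [sum_const, card_univ, Fintype.card_fin, ← Pi.single_smul, nsmul_eq_mul, mul_comm,
          Int.sign_mul_natAbs]
    _ = y := univ_sum_single y

theorem signCompat_unitStep (y : C → ℤ) (p q : UnitStepIndex y) :
    SignCompat (unitStep y p) (unitStep y q) := fun i => by
  simp only [unitStep, Pi.single_apply]
  split_ifs with hp hq
  · rw [← hp, ← hq]; exact mul_self_nonneg _
  all_goals simp

theorem unitStep_ne_zero (y : C → ℤ) (p : UnitStepIndex y) : unitStep y p ≠ 0 := by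
  simpa [unitStep, Int.sign_eq_zero_iff_zero] using p.apply_fst_ne_zero

theorem abs_mulVec_unitStep {R : Type*} [Fintype C] (A : Matrix R C ℤ) (y : C → ℤ)
    (p : UnitStepIndex y) (i : R) : |(A *ᵥ unitStep y p) i| = |A i p.1| := by
  simp [unitStep, abs_mul, Int.abs_sign_of_ne_zero p.apply_fst_ne_zero]

end Graver

/-- Every element of the Graver basis of an integer matrix `A ∈ ℤ^{m×n}` whose
entries are bounded by `Δ` in absolute value has `ℓ₁`-norm at most `(2mΔ+1)^m`. -/
theorem graver_l1_bound (m n : ℕ) (A : Matrix (Fin m) (Fin n) ℤ) (Δ : ℤ)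
    (hA : ∀ i j, |A i j| ≤ Δ)
    (y : Fin n → ℤ) (hy : InGraverBasis A y) :
    ∑ i, |y i| ≤ (2 * (m : ℤ) * Δ + 1) ^ m := by
  obtain ⟨j, -⟩ := Function.ne_iff.mp hy.2.1
  -- `Δ` can be negative only if `A` has no rows.
  have hpow : (2 * (m : ℤ) * max Δ 0 + 1) ^ m = (2 * (m : ℤ) * Δ + 1) ^ m := by
    rcases eq_or_ne m 0 with rfl | hm
    · simp
    · rw [max_eq_left ((abs_nonneg _).trans (hA ⟨0, Nat.pos_of_ne_zero hm⟩ j))]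
  by_contra! hbig
  obtain ⟨s, hs, hsu, hs0⟩ := exists_sum_eq_zero_of_pow_lt_card (fun p => A *ᵥ unitStep y p)
    (le_max_right Δ 0)
    (fun p i => (abs_mulVec_unitStep A y p i).trans_le ((hA i p.1).trans (le_max_left _ _)))
    (by rw [← mulVec_sum, sum_unitStep]; exact hy.1)
    (by simpa [hpow, card_unitStepIndex] using hbig)
  exact hy.mulVec_sum_ne_zero (sum_unitStep y) (signCompat_unitStep y) (unitStep_ne_zero y) hs hsu
    (by rwa [mulVec_sum])
end

section
/- Let 𝒜 be the generalized n-fold matrix built from matrices A^(1), …, A^(n) ∈ ℤ^{r×t} and B^(1), …, B^(n) ∈ ℤ^{s×t}, all of whose entries have absolute value at most Δ. Set L_B = (2sΔ + 1)^s. Then every element y of the Graver basis of 𝒜 satisfies ‖y‖₁ ≤ L_B · (2rΔL_B + 1)^r. -/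
set_option linter.unusedSectionVars false
set_option linter.unusedVariables false
set_option maxHeartbeats 1000000


/-- The generalized `n`-fold matrix: the first `r` rows are the horizontal
concatenation `(A⁽¹⁾ ⋯ A⁽ⁿ⁾)`, the remaining `n·s` rows are the block-diagonal
matrix with blocks `B⁽¹⁾, …, B⁽ⁿ⁾`. -/
def nFoldMatrix {n r s t : ℕ} (A : Fin n → Matrix (Fin r) (Fin t) ℤ)
    (B : Fin n → Matrix (Fin s) (Fin t) ℤ) :
    Matrix (Fin r ⊕ Fin n × Fin s) (Fin n × Fin t) ℤ :=
  Matrix.of fun i jk =>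
    match i with
    | Sum.inl a => A jk.1 a jk.2
    | Sum.inr (b, c) => if b = jk.1 then B b c jk.2 else 0

set_option linter.unusedSectionVars false

open Finset

section SameSign

lemma same_sign_of_sum_abs {ι : Type*} (S : Finset ι) (a : ι → ℤ)
    (h : ∑ j ∈ S, |a j| = |∑ j ∈ S, a j|) :
    (∀ j ∈ S, 0 ≤ a j) ∨ (∀ j ∈ S, a j ≤ 0) := by
  rcases le_or_gt 0 (∑ j ∈ S, a j) with hs | hs
  · left
    have h2 : ∑ j ∈ S, (|a j| - a j) = 0 := by
      rw [Finset.sum_sub_distrib, h, abs_of_nonneg hs, sub_self]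
    intro j hj
    have := (Finset.sum_eq_zero_iff_of_nonneg (fun i _ => by have := neg_abs_le (a i); have := le_abs_self (a i); omega)).1 h2 j hj
    have := abs_nonneg (a j)
    omega
  · right
    have h2 : ∑ j ∈ S, (|a j| + a j) = 0 := by
      rw [Finset.sum_add_distrib, h, abs_of_neg hs]; ring
    intro j hj
    have := (Finset.sum_eq_zero_iff_of_nonneg (fun i _ => by have := neg_abs_le (a i); have := le_abs_self (a i); omega)).1 h2 j hj
    have := abs_nonneg (a j)
    omega

end SameSign

section Steinitz

variable {ι : Type*} [Fintype ι] [DecidableEq ι] {m : ℕ}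

attribute [local instance] Classical.propDecidable

/-- Feasibility predicate in the Grinberg–Sevastyanov chain construction. -/
def Feas (x : ι → Fin m → ℤ) (A : Finset ι) : Prop :=
  ∃ l : ι → ℚ, (∀ j ∈ A, 0 ≤ l j ∧ l j ≤ 1) ∧
    (∑ j ∈ A, l j) = (A.card : ℚ) - m ∧
    ∀ i, ∑ j ∈ A, l j * (x j i : ℚ) = 0

lemma feas_univ (x : ι → Fin m → ℤ) (hx : ∑ j, x j = 0)
    (hm : m ≤ Fintype.card ι) : Feas x Finset.univ := by
  rcases Nat.eq_zero_or_pos (Fintype.card ι) with h0 | hpos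
  · refine ⟨0, fun j hj => by simp, ?_, fun i => by simp⟩
    have : m = 0 := by omega
    simp [this, h0, Finset.card_univ]
  · set N : ℕ := Fintype.card ι with hN
    refine ⟨fun _ => ((N : ℚ) - m) / N, fun j hj => ⟨?_, ?_⟩, ?_, fun i => ?_⟩
    · apply div_nonneg
      · have : (m : ℚ) ≤ N := by exact_mod_cast hm
        linarith
      · positivity
    · rw [div_le_one (by positivity)]
      have : (0:ℚ) ≤ m := by positivity
      linarith
    · rw [Finset.sum_const, Finset.card_univ, ← hN, nsmul_eq_mul]
      field_simp
    · rw [← Finset.mul_sum]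
      have hxi : ∑ j, (x j i : ℚ) = 0 := by
        have h1 : (∑ j, x j) i = 0 := by rw [hx]; rfl
        rw [Finset.sum_apply] at h1
        exact_mod_cast congrArg (Int.cast : ℤ → ℚ) h1
      rw [hxi, mul_zero]


lemma feas_prefix_bound (x : ι → Fin m → ℤ) (c : ℤ) (hc : 0 ≤ c)
    (hxb : ∀ j i, |x j i| ≤ c) (A : Finset ι) (hF : Feas x A) (i : Fin m) :
    |∑ j ∈ A, x j i| ≤ (m : ℤ) * c := by
  obtain ⟨l, hbox, hsum, hvec⟩ := hF
  have key : ((∑ j ∈ A, x j i : ℤ) : ℚ) = ∑ j ∈ A, (1 - l j) * (x j i : ℚ) := by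
    push_cast
    rw [Finset.sum_congr rfl (fun j _ => by ring :
      ∀ j ∈ A, (1 - l j) * (x j i : ℚ) = (x j i : ℚ) - l j * (x j i : ℚ))]
    rw [Finset.sum_sub_distrib, hvec i, sub_zero]
  have hb : |((∑ j ∈ A, x j i : ℤ) : ℚ)| ≤ (m : ℚ) * c := by
    rw [key]
    calc |∑ j ∈ A, (1 - l j) * (x j i : ℚ)| ≤ ∑ j ∈ A, |(1 - l j) * (x j i : ℚ)| :=
          Finset.abs_sum_le_sum_abs _ _
      _ ≤ ∑ j ∈ A, (1 - l j) * (c : ℚ) := by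
          refine Finset.sum_le_sum (fun j hj => ?_)
          rw [abs_mul, abs_of_nonneg (by linarith [(hbox j hj).2] : (0:ℚ) ≤ 1 - l j)]
          refine mul_le_mul_of_nonneg_left ?_ (by linarith [(hbox j hj).2])
          have := hxb j i
          calc |(x j i : ℚ)| = ((|x j i| : ℤ) : ℚ) := by push_cast; ring
            _ ≤ (c : ℚ) := by exact_mod_cast this
      _ = (m : ℚ) * c := by
          rw [← Finset.sum_mul, Finset.sum_sub_distrib, Finset.sum_const, hsum,
            nsmul_eq_mul, mul_one]
          ring
  have : |((∑ j ∈ A, x j i : ℤ) : ℚ)| = ((|∑ j ∈ A, x j i| : ℤ) : ℚ) := by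
    push_cast; ring
  rw [this] at hb
  exact_mod_cast hb

lemma small_prefix_bound (x : ι → Fin m → ℤ) (c : ℤ) (hc : 0 ≤ c)
    (hxb : ∀ j i, |x j i| ≤ c) (A : Finset ι) (hA : A.card ≤ m) (i : Fin m) :
    |∑ j ∈ A, x j i| ≤ (m : ℤ) * c := by
  calc |∑ j ∈ A, x j i| ≤ ∑ j ∈ A, |x j i| := Finset.abs_sum_le_sum_abs _ _
    _ ≤ ∑ j ∈ A, c := Finset.sum_le_sum (fun j _ => hxb j i)
    _ = (A.card : ℤ) * c := by rw [Finset.sum_const, nsmul_eq_mul]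
    _ ≤ (m : ℤ) * c := mul_le_mul_of_nonneg_right (by exact_mod_cast hA) hc

lemma exists_kernel_vec (F : Finset ι) (hcard : m + 1 < F.card) (w : ι → Fin m → ℚ) :
    ∃ g : ι → ℚ, (∀ j, j ∉ F → g j = 0) ∧ g ≠ 0 ∧ (∑ j ∈ F, g j) = 0 ∧
      ∀ i, ∑ j ∈ F, g j * w j i = 0 := by
  classical
  let φ : ({ j // j ∈ F } → ℚ) →ₗ[ℚ] (Fin m → ℚ) × ℚ :=
    { toFun := fun g => (fun i => ∑ j, g j * w j.1 i, ∑ j, g j)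
      map_add' := by
        intro g h
        refine Prod.ext (funext fun i => ?_) ?_ <;> simp [add_mul, Finset.sum_add_distrib]
      map_smul' := by
        intro a g
        refine Prod.ext (funext fun i => ?_) ?_ <;>
          simp [Finset.mul_sum, mul_assoc] }
  have hni : ¬ Function.Injective φ := by
    intro hinj
    have h1 := LinearMap.finrank_le_finrank_of_injective hinj
    rw [Module.finrank_pi, Module.finrank_prod, Module.finrank_pi, Module.finrank_self,
      Fintype.card_coe, Fintype.card_fin] at h1
    omega
  rw [Function.not_injective_iff] at hni
  obtain ⟨g1, g2, heq, hne⟩ := hni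
  set g0 : { j // j ∈ F } → ℚ := g1 - g2 with hg0
  have hker : φ g0 = 0 := by rw [hg0, map_sub, heq, sub_self]
  refine ⟨fun j => if h : j ∈ F then g0 ⟨j, h⟩ else 0, fun j hj => dif_neg hj, ?_, ?_, ?_⟩
  · intro hzero
    apply hne
    have : g0 = 0 := by
      funext j
      have := congrFun hzero j.1
      rwa [dif_pos j.2, Subtype.coe_eta] at this
    rwa [hg0, sub_eq_zero] at this
  · have hthis := congrArg Prod.snd hker
    simp only [φ, LinearMap.coe_mk, AddHom.coe_mk, Prod.snd_zero] at hthis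
    rw [← Finset.sum_coe_sort F, ← hthis]
    refine Finset.sum_congr rfl (fun j _ => ?_)
    rw [dif_pos j.2, Subtype.coe_eta]
  · intro i
    have hthis := congrFun (congrArg Prod.fst hker) i
    simp only [φ, LinearMap.coe_mk, AddHom.coe_mk, Prod.fst_zero, Pi.zero_apply] at hthis
    rw [← Finset.sum_coe_sort F (fun j => (if h : j ∈ F then g0 ⟨j,h⟩ else 0) * w j i),
      ← hthis]
    refine Finset.sum_congr rfl (fun j _ => ?_)
    rw [dif_pos j.2, Subtype.coe_eta]

lemma feas_step (x : ι → Fin m → ℤ) (A : Finset ι) (hF : Feas x A) (hm : m < A.card) :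
    ∃ j ∈ A, Feas x (A.erase j) := by
  classical
  set T : ℚ := (A.card : ℚ) - 1 - m with hT
  set Q : (ι → ℚ) → Prop := fun l => (∀ j ∈ A, 0 ≤ l j ∧ l j ≤ 1) ∧
    (∑ j ∈ A, l j) = T ∧ (∀ i, ∑ j ∈ A, l j * (x j i : ℚ) = 0) with hQdef
  set fr : (ι → ℚ) → Finset ι := fun l => A.filter (fun j => l j ≠ 0 ∧ l j ≠ 1) with hfrdef
  obtain ⟨l0, hbox0, hsum0, hvec0⟩ := hF
  have hmA : (m : ℚ) + 1 ≤ (A.card : ℚ) := by exact_mod_cast hm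
  have hcm : (0:ℚ) < (A.card : ℚ) - m := by linarith
  set ρ : ℚ := T / ((A.card : ℚ) - m) with hρ
  have hρ0 : 0 ≤ ρ := div_nonneg (by rw [hT]; linarith) hcm.le
  have hρ1 : ρ ≤ 1 := by rw [hρ, div_le_one hcm, hT]; linarith
  have hQ0 : Q (fun j => ρ * l0 j) := by
    refine ⟨fun j hj => ⟨mul_nonneg hρ0 (hbox0 j hj).1, ?_⟩, ?_, fun i => ?_⟩
    · calc ρ * l0 j ≤ 1 * 1 :=
            mul_le_mul hρ1 (hbox0 j hj).2 (hbox0 j hj).1 one_pos.le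
        _ = 1 := mul_one 1
    · rw [← Finset.mul_sum, hsum0, hρ]
      field_simp
    · rw [Finset.sum_congr rfl (fun j _ => mul_assoc ρ (l0 j) ((x j i : ℚ))),
        ← Finset.mul_sum, hvec0 i, mul_zero]
  have hex : ∃ d : ℕ, ∃ l, Q l ∧ (fr l).card = d := ⟨_, _, hQ0, rfl⟩
  obtain ⟨l1, hQ1, hd1⟩ := Nat.find_spec hex
  have hmin : ∀ l, Q l → Nat.find hex ≤ (fr l).card :=
    fun l h => Nat.find_min' hex ⟨l, h, rfl⟩
  have hfrA : fr l1 ⊆ A := Finset.filter_subset _ A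
  have hint : ∀ j ∈ fr l1, 0 < l1 j ∧ l1 j < 1 := by
    intro j hj
    rw [hfrdef, Finset.mem_filter] at hj
    obtain ⟨hjA, hne0, hne1⟩ := hj
    exact ⟨lt_of_le_of_ne (hQ1.1 j hjA).1 (Ne.symm hne0),
      lt_of_le_of_ne (hQ1.1 j hjA).2 hne1⟩
  -- the minimizer has at most m+1 fractional coordinates
  have hfr : (fr l1).card ≤ m + 1 := by
    by_contra hgt
    push_neg at hgt
    obtain ⟨g, hgsupp, hgne, hgsum, hgvec⟩ :=
      exists_kernel_vec (fr l1) hgt (fun j i => (x j i : ℚ))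
    have hF'ne : ∃ j, j ∈ fr l1 ∧ g j ≠ 0 := by
      by_contra hall
      push_neg at hall
      apply hgne
      funext j
      by_cases hj : j ∈ fr l1
      · exact hall j hj
      · exact hgsupp j hj
    set F' := (fr l1).filter (fun j => g j ≠ 0) with hF'
    have hF'nonempty : F'.Nonempty :=
      ⟨hF'ne.choose, Finset.mem_filter.mpr ⟨hF'ne.choose_spec.1, hF'ne.choose_spec.2⟩⟩
    set δ : ι → ℚ := fun j => if 0 < g j then (1 - l1 j) / g j else l1 j / (-(g j)) with hδ
    have hδpos : ∀ j ∈ F', 0 < δ j := by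
      intro j hj
      rw [hF', Finset.mem_filter] at hj
      obtain ⟨hjf, hgj⟩ := hj
      obtain ⟨h0, h1⟩ := hint j hjf
      rw [hδ]
      dsimp only
      rcases lt_or_gt_of_ne hgj with hneg | hpos
      · rw [if_neg (by linarith)]
        exact div_pos h0 (by linarith)
      · rw [if_pos hpos]
        exact div_pos (by linarith) hpos
    obtain ⟨tval, htmem, htmin⟩ : ∃ tv ∈ F'.image δ, ∀ b ∈ F'.image δ, tv ≤ b :=
      ⟨(F'.image δ).min' (hF'nonempty.image δ), Finset.min'_mem _ _,
        fun b hb => Finset.min'_le _ b hb⟩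
    obtain ⟨jstar, hjstarF', hjstarδ⟩ := Finset.mem_image.mp htmem
    have htpos : 0 < tval := hjstarδ ▸ hδpos jstar hjstarF'
    have htle : ∀ j ∈ F', tval ≤ δ j := fun j hj => htmin _ (Finset.mem_image_of_mem δ hj)
    set l2 : ι → ℚ := fun j => l1 j + tval * g j with hl2
    have hsupp2 : ∀ j, j ∉ fr l1 → l2 j = l1 j := by
      intro j hj
      rw [hl2]
      dsimp only
      rw [hgsupp j hj, mul_zero, add_zero]
    have hgA : ∑ j ∈ A, g j = 0 := by
      rw [← Finset.sum_subset hfrA (fun j _ hj => hgsupp j hj)]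
      exact hgsum
    have hgxA : ∀ i, ∑ j ∈ A, g j * (x j i : ℚ) = 0 := by
      intro i
      rw [← Finset.sum_subset hfrA (fun j _ hj => by rw [hgsupp j hj, zero_mul])]
      exact hgvec i
    have hQ2 : Q l2 := by
      refine ⟨?_, ?_, fun i => ?_⟩
      · intro j hjA
        by_cases hjf : j ∈ fr l1
        · by_cases hgj : g j = 0
          · rw [hl2]; dsimp only; rw [hgj, mul_zero, add_zero]; exact hQ1.1 j hjA
          · have hjF' : j ∈ F' := Finset.mem_filter.mpr ⟨hjf, hgj⟩
            obtain ⟨h0, h1⟩ := hint j hjf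
            have htj := htle j hjF'
            rw [hl2]; dsimp only
            rcases lt_or_gt_of_ne hgj with hneg | hpos
            · have hδj : δ j = l1 j / (-(g j)) := by
                rw [hδ]; dsimp only; rw [if_neg (by linarith)]
              have hδg : δ j * g j = - l1 j := by
                rw [hδj, div_mul_eq_mul_div, div_neg, mul_div_assoc, div_self hgj,
                  mul_one]
              have hmul : δ j * g j ≤ tval * g j :=
                mul_le_mul_of_nonpos_right htj hneg.le
              constructor
              · linarith
              · nlinarith
            · have hδj : δ j = (1 - l1 j) / g j := by
                rw [hδ]; dsimp only; rw [if_pos hpos]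
              have hδg : δ j * g j = 1 - l1 j := by
                rw [hδj, div_mul_cancel₀ _ hgj]
              have hmul : tval * g j ≤ δ j * g j :=
                mul_le_mul_of_nonneg_right htj hpos.le
              constructor
              · nlinarith
              · linarith
        · rw [hsupp2 j hjf]; exact hQ1.1 j hjA
      · have : ∑ j ∈ A, l2 j = ∑ j ∈ A, l1 j + tval * ∑ j ∈ A, g j := by
          rw [Finset.mul_sum, ← Finset.sum_add_distrib]
        rw [this, hgA, mul_zero, add_zero]
        exact hQ1.2.1
      · have : ∑ j ∈ A, l2 j * (x j i : ℚ) =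
            ∑ j ∈ A, l1 j * (x j i : ℚ) + tval * ∑ j ∈ A, g j * (x j i : ℚ) := by
          rw [Finset.mul_sum, ← Finset.sum_add_distrib]
          exact Finset.sum_congr rfl (fun j _ => by rw [hl2]; ring)
        rw [this, hgxA i, mul_zero, add_zero]
        exact hQ1.2.2 i
    have hjstarfr : jstar ∈ fr l1 := (Finset.mem_filter.mp hjstarF').1
    have hgstar : g jstar ≠ 0 := (Finset.mem_filter.mp hjstarF').2
    have hl2star : l2 jstar = 0 ∨ l2 jstar = 1 := by
      rw [hl2]
      dsimp only
      rcases lt_or_gt_of_ne hgstar with hneg | hpos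
      · left
        have hδj : δ jstar = l1 jstar / (-(g jstar)) := by
          rw [hδ]; dsimp only; rw [if_neg (by linarith)]
        rw [← hjstarδ, hδj, div_mul_eq_mul_div, div_neg, mul_div_assoc,
          div_self hgstar, mul_one]
        ring
      · right
        have hδj : δ jstar = (1 - l1 jstar) / g jstar := by
          rw [hδ]; dsimp only; rw [if_pos hpos]
        rw [← hjstarδ, hδj, div_mul_cancel₀ _ hgstar]
        ring
    have hsub : fr l2 ⊆ (fr l1).erase jstar := by
      intro j hj
      rw [hfrdef, Finset.mem_filter] at hj
      obtain ⟨hjA, hne0, hne1⟩ := hj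
      have hjfr1 : j ∈ fr l1 := by
        by_contra hjf
        rw [hsupp2 j hjf] at hne0 hne1
        rw [hfrdef, Finset.mem_filter] at hjf
        push_neg at hjf
        rcases Classical.em (l1 j = 0) with h | h
        · exact hne0 h
        · exact hne1 (by tauto)
      refine Finset.mem_erase.mpr ⟨?_, hjfr1⟩
      intro hjeq
      subst hjeq
      rcases hl2star with h | h
      · exact hne0 h
      · exact hne1 h
    have hcard2 : (fr l2).card < (fr l1).card := by
      calc (fr l2).card ≤ ((fr l1).erase jstar).card := Finset.card_le_card hsub
        _ = (fr l1).card - 1 := Finset.card_erase_of_mem hjstarfr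
        _ < (fr l1).card := by
            have : 0 < (fr l1).card := by omega
            omega
    have := hmin l2 hQ2
    omega
  -- l1 has a zero coordinate in A
  have hzero : ∃ j0 ∈ A, l1 j0 = 0 := by
    by_contra hno
    push_neg at hno
    set O := A.filter (fun j => l1 j = 1) with hO
    have hOA : O ⊆ A := Finset.filter_subset _ A
    have hsplit : ∑ j ∈ A \ O, l1 j + ∑ j ∈ O, l1 j = ∑ j ∈ A, l1 j :=
      Finset.sum_sdiff hOA
    have hOsum : ∑ j ∈ O, l1 j = (O.card : ℚ) := by
      rw [Finset.sum_congr rfl (fun j hj => (Finset.mem_filter.mp hj).2),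
        Finset.sum_const, nsmul_eq_mul, mul_one]
    have hsubF : A \ O ⊆ fr l1 := by
      intro j hj
      rw [Finset.mem_sdiff] at hj
      refine Finset.mem_filter.mpr ⟨hj.1, hno j hj.1, ?_⟩
      intro h1
      exact hj.2 (Finset.mem_filter.mpr ⟨hj.1, h1⟩)
    have hzcard : (A \ O).card ≤ m + 1 := le_trans (Finset.card_le_card hsubF) hfr
    have hOcard : (O.card : ℚ) = (A.card : ℚ) - ((A \ O).card : ℚ) := by
      have h1 : (A \ O).card = A.card - O.card := Finset.card_sdiff_of_subset hOA
      have h2 : O.card ≤ A.card := Finset.card_le_card hOA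
      push_cast [h1, Nat.cast_sub h2]
      ring
    rcases Finset.eq_empty_or_nonempty (A \ O) with hes | hne
    · rw [hes, Finset.sum_empty] at hsplit
      rw [hes] at hOcard
      simp at hOcard
      rw [hOsum, hOcard] at hsplit
      rw [hQ1.2.1, hT] at hsplit
      have : (0:ℚ) ≤ m := by positivity
      linarith
    · have hpos : 0 < ∑ j ∈ A \ O, l1 j := by
        refine Finset.sum_pos (fun j hj => ?_) hne
        have hjA := (Finset.mem_sdiff.mp hj).1
        exact lt_of_le_of_ne (hQ1.1 j hjA).1 (Ne.symm (hno j hjA))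
      have hsum2 : ∑ j ∈ A \ O, l1 j = T - (O.card : ℚ) := by
        have h3 := hQ1.2.1
        rw [← hsplit, hOsum] at h3
        linarith
      have hzQ : ((A \ O).card : ℚ) ≤ (m : ℚ) + 1 := by exact_mod_cast hzcard
      rw [hsum2, hOcard, hT] at hpos
      linarith
  obtain ⟨j0, hj0A, hj0⟩ := hzero
  refine ⟨j0, hj0A, l1, fun j hj => hQ1.1 j (Finset.mem_of_mem_erase hj), ?_, fun i => ?_⟩
  · rw [Finset.sum_erase _ hj0, hQ1.2.1, Finset.card_erase_of_mem hj0A, hT,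
      Nat.cast_sub (by omega : 1 ≤ A.card)]
    push_cast
    ring
  · rw [Finset.sum_erase _ (by rw [hj0, zero_mul])]
    exact hQ1.2.2 i

noncomputable def nextSet (x : ι → Fin m → ℤ) (A : Finset ι) : Finset ι :=
  if h : ∃ j ∈ A, Feas x (A.erase j) then A.erase h.choose
  else if h2 : A.Nonempty then A.erase (Exists.choose h2) else ∅

lemma nextSet_subset (x : ι → Fin m → ℤ) (A : Finset ι) : nextSet x A ⊆ A := by
  rw [nextSet]
  by_cases h1 : ∃ j ∈ A, Feas x (A.erase j)
  · rw [dif_pos h1]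
    exact Finset.erase_subset _ _
  · rw [dif_neg h1]
    by_cases h2 : A.Nonempty
    · rw [dif_pos h2]
      exact Finset.erase_subset _ _
    · rw [dif_neg h2]
      exact Finset.empty_subset _

lemma nextSet_card (x : ι → Fin m → ℤ) (A : Finset ι) (hA : A.Nonempty) :
    (nextSet x A).card = A.card - 1 := by
  rw [nextSet]
  by_cases h1 : ∃ j ∈ A, Feas x (A.erase j)
  · rw [dif_pos h1]
    exact Finset.card_erase_of_mem h1.choose_spec.1
  · rw [dif_neg h1]
    by_cases h2 : A.Nonempty
    · rw [dif_pos h2]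
      exact Finset.card_erase_of_mem (Exists.choose_spec h2)
    · exact absurd hA h2

lemma nextSet_feas (x : ι → Fin m → ℤ) (A : Finset ι) (hA : Feas x A) (hm : m < A.card) :
    Feas x (nextSet x A) := by
  have hex := feas_step x A hA hm
  rw [nextSet, dif_pos hex]
  exact hex.choose_spec.2

lemma exists_chain (x : ι → Fin m → ℤ) (c : ℤ) (hc : 0 ≤ c) (hxb : ∀ j i, |x j i| ≤ c)
    (hx : ∑ j, x j = 0) (hm : m ≤ Fintype.card ι) :
    ∃ C : ℕ → Finset ι, (∀ k, C k ⊆ C (k+1)) ∧ (∀ k ≤ Fintype.card ι, (C k).card = k) ∧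
      (∀ k ≤ Fintype.card ι, ∀ i, |∑ j ∈ C k, x j i| ≤ (m:ℤ) * c) := by
  classical
  set N := Fintype.card ι with hN
  set D : ℕ → Finset ι := fun d => (nextSet x)^[d] Finset.univ with hD
  have hD0 : D 0 = Finset.univ := rfl
  have hDsucc : ∀ d, D (d+1) = nextSet x (D d) := by
    intro d
    rw [hD]
    simp [Function.iterate_succ_apply']
  have hDsub : ∀ d, D (d+1) ⊆ D d := fun d => by
    rw [hDsucc]; exact nextSet_subset _ _
  have hDcard : ∀ d, d ≤ N → (D d).card = N - d := by
    intro d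
    induction d with
    | zero => intro _; rw [hD0, Finset.card_univ]; omega
    | succ d ih =>
      intro hd
      have h1 := ih (by omega)
      have hne : (D d).Nonempty := by
        rw [← Finset.card_pos, h1]; omega
      rw [hDsucc, nextSet_card x _ hne, h1]
      omega
  have hDfeas : ∀ d, d + m ≤ N → Feas x (D d) := by
    intro d
    induction d with
    | zero => intro _; rw [hD0]; exact feas_univ x hx hm
    | succ d ih =>
      intro hd
      have hfd := ih (by omega)
      have hcd := hDcard d (by omega)
      rw [hDsucc]
      exact nextSet_feas x _ hfd (by omega)
  refine ⟨fun k => D (N - k), ?_, ?_, ?_⟩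
  · intro k
    show D (N - k) ⊆ D (N - (k + 1))
    by_cases hk : k + 1 ≤ N
    · have h2 : N - k = (N - (k+1)) + 1 := by omega
      rw [h2]
      exact hDsub _
    · have h2 : N - k = N - (k+1) := by omega
      rw [h2]
  · intro k hk
    show (D (N - k)).card = k
    rw [hDcard _ (by omega)]
    omega
  · intro k hk i
    show |∑ j ∈ D (N - k), x j i| ≤ (m:ℤ) * c
    by_cases hmk : m ≤ k
    · exact feas_prefix_bound x c hc hxb _ (hDfeas (N - k) (by omega)) i
    · refine small_prefix_bound x c hc hxb _ ?_ i
      rw [hDcard _ (by omega)]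
      omega

lemma exists_zero_sum_subset (x : ι → Fin m → ℤ) (c : ℤ) (hc : 0 ≤ c)
    (hxb : ∀ j i, |x j i| ≤ c) (hx : ∑ j, x j = 0)
    (hcard : (2 * m * c + 1) ^ m < (Fintype.card ι : ℤ)) :
    ∃ S : Finset ι, S.Nonempty ∧ S ≠ Finset.univ ∧ ∑ j ∈ S, x j = 0 := by
  classical
  set N := Fintype.card ι with hN
  have hpow1 : (1:ℤ) ≤ (2 * m * c + 1) ^ m := by
    have h0 : (0:ℤ) < 2 * m * c + 1 := by positivity
    exact pow_pos h0 m
  have hN2 : 1 < N := by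
    have : (1:ℤ) < (N:ℤ) := lt_of_le_of_lt hpow1 hcard
    exact_mod_cast this
  rcases eq_or_lt_of_le hc with hc0 | hcpos
  · have hx0 : ∀ j, x j = 0 := by
      intro j
      funext i
      have h1 := hxb j i
      rw [← hc0] at h1
      have h2 := abs_le.mp h1
      simp only [Pi.zero_apply]
      omega
    have hne : Nonempty ι := by
      rw [← Fintype.card_pos_iff]
      omega
    obtain ⟨j0⟩ := hne
    refine ⟨{j0}, Finset.singleton_nonempty _, ?_, by simp [hx0]⟩
    intro h
    have h1 : ({j0} : Finset ι).card = N := by rw [h, Finset.card_univ]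
    rw [Finset.card_singleton] at h1
    omega
  · have hc1 : (1:ℤ) ≤ c := hcpos
    have hmN : m ≤ N := by
      rcases Nat.eq_zero_or_pos m with h0 | hm1
      · omega
      · have h1 : (m : ℤ) + 1 ≤ 2 * m * c + 1 := by
          have : (m:ℤ) ≤ 2 * m * c := by nlinarith [Int.ofNat_zero_le m]
          linarith
        have h2 : (2*(m:ℤ)*c+1) ≤ (2*(m:ℤ)*c+1)^m :=
          le_self_pow₀ (by linarith [Int.ofNat_zero_le m] : (1:ℤ) ≤ 2*(m:ℤ)*c+1) (by omega)
        have h3 : (m:ℤ) < N := by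
          calc (m:ℤ) < (m:ℤ) + 1 := by omega
            _ ≤ (2*(m:ℤ)*c+1)^m := le_trans h1 h2
            _ < N := hcard
        exact_mod_cast h3.le
    obtain ⟨C, hCsub, hCcard, hCbound⟩ := exists_chain x c hc hxb hx hmN
    have hmono : ∀ p q, p ≤ q → C p ⊆ C q := by
      intro p q hpq
      induction q, hpq using Nat.le_induction with
      | base => exact subset_rfl
      | succ q hq ih => exact le_trans ih (hCsub q)
    set box := Finset.Icc (-((m:ℤ)*c)) ((m:ℤ)*c) with hbox
    have hmem : ∀ k, k ≤ N → ∀ i, (∑ j ∈ C k, x j i) ∈ box := fun k hk i =>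
      Finset.mem_Icc.mpr (abs_le.mp (hCbound k hk i))
    set f : Fin N → (Fin m → {v // v ∈ box}) :=
      fun k i => ⟨∑ j ∈ C k.1, x j i, hmem k.1 k.2.le i⟩ with hf
    have hboxcard : Fintype.card {v // v ∈ box} = (2*(m:ℤ)*c+1).toNat := by
      rw [Fintype.card_coe, hbox, Int.card_Icc]
      congr 1
      ring
    have hcardlt : Fintype.card (Fin m → {v // v ∈ box}) < Fintype.card (Fin N) := by
      rw [Fintype.card_fun, hboxcard, Fintype.card_fin, Fintype.card_fin]
      have hcast : (((2*(m:ℤ)*c+1).toNat : ℤ))^m < (N:ℤ) := by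
        rw [Int.toNat_of_nonneg (by positivity)]
        exact hcard
      exact_mod_cast hcast
    obtain ⟨k1, k2, hk12, hfeq⟩ := Fintype.exists_ne_map_eq_of_card_lt f hcardlt
    obtain ⟨a, b, hab, hfab⟩ : ∃ a b : Fin N, a < b ∧ f a = f b := by
      rcases lt_or_gt_of_ne hk12 with h | h
      · exact ⟨k1, k2, h, hfeq⟩
      · exact ⟨k2, k1, h, hfeq.symm⟩
    have hsubab : C a.1 ⊆ C b.1 := hmono _ _ hab.le
    have hcarda : (C a.1).card = a.1 := hCcard a.1 a.2.le
    have hcardb : (C b.1).card = b.1 := hCcard b.1 b.2.le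
    refine ⟨C b.1 \ C a.1, ?_, ?_, ?_⟩
    · rw [← Finset.card_pos, Finset.card_sdiff_of_subset hsubab, hcarda, hcardb]
      have := hab
      omega
    · intro habs
      have h1 : (C b.1 \ C a.1).card ≤ (C b.1).card := Finset.card_le_card (Finset.sdiff_subset)
      rw [habs, Finset.card_univ, hcardb] at h1
      have := b.2
      omega
    · funext i
      have h1 : ∑ j ∈ C a.1, x j i = ∑ j ∈ C b.1, x j i :=
        congrArg Subtype.val (congrFun hfab i)
      rw [Finset.sum_apply, Finset.sum_sdiff_eq_sub hsubab, ← h1]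
      simp

end Steinitz

section Decomp

variable {s' t' : ℕ}

lemma sign_cases (a : ℤ) (h : a ≠ 0) : a.sign = 1 ∨ a.sign = -1 := by
  rcases lt_trichotomy a 0 with h1 | h1 | h1
  · right; exact Int.sign_eq_neg_one_of_neg h1
  · exact absurd h1 h
  · left; exact Int.sign_eq_one_of_pos h1

lemma abs_sign_mul_le (a b : ℤ) (c : ℤ) (hb : |b| ≤ c) : |a.sign * b| ≤ c := by
  by_cases h : a = 0
  · simp [h]
    exact le_trans (abs_nonneg b) hb
  · rcases sign_cases a h with h1 | h1 <;> rw [h1] <;> simpa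

lemma split_cycle (M : Matrix (Fin s') (Fin t') ℤ) (Δ : ℤ) (hΔ : 0 ≤ Δ)
    (hM : ∀ a p, |M a p| ≤ Δ) (y : Fin t' → ℤ) (hcy : M.mulVec y = 0)
    (h1 : (2 * (s' : ℤ) * Δ + 1) ^ s' < ∑ p, |y p|) :
    ∃ u : Fin t' → ℤ, M.mulVec u = 0 ∧ u ≠ 0 ∧ u ≠ y ∧
      (∀ p, |u p| + |y p - u p| = |y p|) := by
  classical
  set J := (Σ p : Fin t', Fin (y p).natAbs) with hJ
  set xx : J → Fin s' → ℤ := fun q a => (y q.1).sign * M a q.1 with hxx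
  have hb : ∀ q a, |xx q a| ≤ Δ := fun q a => abs_sign_mul_le _ _ _ (hM a q.1)
  have hsum : ∑ q, xx q = 0 := by
    funext a
    rw [Finset.sum_apply]
    rw [← Finset.univ_sigma_univ, Finset.sum_sigma]
    have hconst : ∀ p : Fin t', ∑ i : Fin (y p).natAbs, xx ⟨p, i⟩ a = y p * M a p := by
      intro p
      have hterm : ∀ i : Fin (y p).natAbs, xx ⟨p, i⟩ a = (y p).sign * M a p := fun i => rfl
      rw [Finset.sum_congr rfl (fun i _ => hterm i), Finset.sum_const, Finset.card_univ,
        Fintype.card_fin, nsmul_eq_mul, ← mul_assoc,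
        mul_comm (((y p).natAbs : ℕ) : ℤ) (y p).sign, Int.sign_mul_natAbs]
    rw [Finset.sum_congr rfl (fun p _ => hconst p)]
    have h2 := congrFun hcy a
    simp only [Matrix.mulVec, dotProduct, Pi.zero_apply] at h2
    simp only [Pi.zero_apply]
    rw [← h2]
    exact Finset.sum_congr rfl (fun p _ => mul_comm _ _)
  have hcardJ : (Fintype.card J : ℤ) = ∑ p, |y p| := by
    rw [Fintype.card_sigma]
    push_cast
    refine Finset.sum_congr rfl (fun p _ => ?_)
    rw [Fintype.card_fin, Int.abs_eq_natAbs]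
  obtain ⟨S, hSne, hSuniv, hSsum⟩ := exists_zero_sum_subset xx Δ hΔ hb hsum
    (by rw [hcardJ]; exact h1)
  have hfib : ∀ p : Fin t', (Finset.univ.filter (fun q : J => q.1 = p)).card
      = (y p).natAbs := by
    intro p
    rw [Finset.card_filter]
    rw [← Finset.univ_sigma_univ, Finset.sum_sigma]
    have : ∀ p' : Fin t', (∑ i : Fin (y p').natAbs,
        if (⟨p', i⟩ : J).1 = p then 1 else 0) = if p' = p then (y p').natAbs else 0 := by
      intro p'
      by_cases h : p' = p
      · simp [h]
      · simp [h]
    rw [Finset.sum_congr rfl (fun p' _ => this p')]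
    simp
  have hfilter_le : ∀ p : Fin t', (S.filter (fun q : J => q.1 = p)).card ≤ (y p).natAbs :=
    fun p => le_trans (Finset.card_le_card
      (Finset.filter_subset_filter _ (Finset.subset_univ S))) (le_of_eq (hfib p))
  set u : Fin t' → ℤ := fun p => (y p).sign * ((S.filter (fun q : J => q.1 = p)).card : ℤ)
    with hu
  have hfib0 : ∀ p, y p = 0 → (S.filter (fun q : J => q.1 = p)).card = 0 := by
    intro p hp
    have := hfilter_le p
    rw [hp] at this
    simpa using this
  refine ⟨u, ?_, ?_, ?_, ?_⟩
  · funext a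
    have hz : ∑ q ∈ S, xx q a = 0 := by
      have := congrFun hSsum a
      rw [Finset.sum_apply] at this
      exact this
    simp only [Matrix.mulVec, dotProduct, Pi.zero_apply]
    have key : ∀ p, M a p * u p = ∑ q ∈ S.filter (fun q : J => q.1 = p), xx q a := by
      intro p
      rw [Finset.sum_congr rfl (fun q hq => by
        rw [hxx]; dsimp only; rw [(Finset.mem_filter.mp hq).2] :
        ∀ q ∈ S.filter (fun q : J => q.1 = p), xx q a = (y p).sign * M a p)]
      rw [Finset.sum_const, nsmul_eq_mul, hu]
      dsimp only
      ring
    rw [Finset.sum_congr rfl (fun p _ => key p)]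
    rw [Finset.sum_fiberwise S (fun q : J => q.1) (fun q => xx q a)]
    exact hz
  · obtain ⟨q0, hq0⟩ := hSne
    intro habs
    have h2 : (y q0.1).sign * ((S.filter (fun q : J => q.1 = q0.1)).card : ℤ) = 0 :=
      congrFun habs q0.1
    rcases mul_eq_zero.mp h2 with h3 | h3
    · exact Int.natAbs_pos.mp q0.2.pos (Int.sign_eq_zero_iff_zero.mp h3)
    · have : q0 ∈ S.filter (fun q : J => q.1 = q0.1) := Finset.mem_filter.mpr ⟨hq0, rfl⟩
      have hpos := Finset.card_pos.mpr ⟨q0, this⟩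
      omega
  · obtain ⟨q1, hq1⟩ : ∃ q1 : J, q1 ∉ S := by
      by_contra hall
      push_neg at hall
      exact hSuniv (Finset.eq_univ_iff_forall.mpr hall)
    intro habs
    have hmemfib : q1 ∈ Finset.univ.filter (fun q : J => q.1 = q1.1) :=
      Finset.mem_filter.mpr ⟨Finset.mem_univ _, rfl⟩
    have hsubset : S.filter (fun q : J => q.1 = q1.1) ⊆
        (Finset.univ.filter (fun q : J => q.1 = q1.1)).erase q1 := by
      intro q hq
      refine Finset.mem_erase.mpr ⟨?_,
        Finset.mem_filter.mpr ⟨Finset.mem_univ _, (Finset.mem_filter.mp hq).2⟩⟩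
      intro he
      rw [he] at hq
      exact hq1 (Finset.mem_of_mem_filter _ hq)
    have hcard1 : (S.filter (fun q : J => q.1 = q1.1)).card ≤ (y q1.1).natAbs - 1 := by
      calc (S.filter (fun q : J => q.1 = q1.1)).card
          ≤ ((Finset.univ.filter (fun q : J => q.1 = q1.1)).erase q1).card :=
            Finset.card_le_card hsubset
        _ = (y q1.1).natAbs - 1 := by rw [Finset.card_erase_of_mem hmemfib, hfib]
    have hy1 : y q1.1 ≠ 0 := Int.natAbs_pos.mp q1.2.pos
    have habs1 : (y q1.1).sign * ((S.filter (fun q : J => q.1 = q1.1)).card : ℤ) = y q1.1 :=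
      congrFun habs q1.1
    have hlt : |(y q1.1).sign * ((S.filter (fun q : J => q.1 = q1.1)).card : ℤ)| < |y q1.1| := by
      have hu1 : |(y q1.1).sign * ((S.filter (fun q : J => q.1 = q1.1)).card : ℤ)|
          = ((S.filter (fun q : J => q.1 = q1.1)).card : ℤ) := by
        rw [abs_mul]
        rcases sign_cases (y q1.1) hy1 with h | h <;> rw [h] <;> simp
      rw [hu1, Int.abs_eq_natAbs]
      have hpos := q1.2.pos
      omega
    rw [habs1] at hlt
    exact lt_irrefl _ hlt
  · intro p
    by_cases hyp : y p = 0
    · have h0 := hfib0 p hyp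
      have hup : u p = 0 := by
        show (y p).sign * ((S.filter (fun q : J => q.1 = p)).card : ℤ) = 0
        rw [hyp, h0]
        simp
      rw [hup, hyp]
      simp
    · have hcp0 : (0:ℤ) ≤ ((S.filter (fun q : J => q.1 = p)).card : ℤ) := Int.ofNat_nonneg _
      have hcple : ((S.filter (fun q : J => q.1 = p)).card : ℤ) ≤ |y p| := by
        rw [Int.abs_eq_natAbs]
        exact_mod_cast hfilter_le p
      show |(y p).sign * ((S.filter (fun q : J => q.1 = p)).card : ℤ)| +
        |y p - (y p).sign * ((S.filter (fun q : J => q.1 = p)).card : ℤ)| = |y p|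
      set cp := ((S.filter (fun q : J => q.1 = p)).card : ℤ)
      rcases lt_trichotomy (y p) 0 with h | h | h
      · have habsy : |y p| = -(y p) := abs_of_neg h
        rw [Int.sign_eq_neg_one_of_neg h]
        have e1 : (-1 : ℤ) * cp = -cp := by ring
        rw [e1, abs_neg, abs_of_nonneg hcp0]
        have e2 : y p - -cp = y p + cp := by ring
        rw [e2, abs_of_nonpos (by linarith : y p + cp ≤ 0), habsy]
        ring
      · exact absurd h hyp
      · have habsy : |y p| = y p := abs_of_pos h
        rw [Int.sign_eq_one_of_pos h, one_mul, abs_of_nonneg hcp0,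
          abs_of_nonneg (by linarith : (0:ℤ) ≤ y p - cp), habsy]
        ring

lemma graver_decomp (M : Matrix (Fin s') (Fin t') ℤ) (Δ : ℤ) (hΔ : 0 ≤ Δ)
    (hM : ∀ a p, |M a p| ≤ Δ) (K : ℕ) :
    ∀ y : Fin t' → ℤ, (∑ p, |y p|).toNat = K → M.mulVec y = 0 →
    ∃ (k : ℕ) (g : Fin k → Fin t' → ℤ),
      (∀ l, M.mulVec (g l) = 0) ∧ (∀ l, g l ≠ 0) ∧
      (∀ l, ∑ p, |g l p| ≤ (2 * (s' : ℤ) * Δ + 1) ^ s') ∧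
      (∀ p, ∑ l, g l p = y p) ∧ (∑ l, ∑ p, |g l p| = ∑ p, |y p|) := by
  induction K using Nat.strong_induction_on with
  | _ K ih =>
    intro y hK hcy
    by_cases h0 : y = 0
    · refine ⟨0, Fin.elim0, fun l => l.elim0, fun l => l.elim0, fun l => l.elim0,
        fun p => ?_, ?_⟩
      · rw [h0]; simp
      · rw [h0]; simp
    by_cases h1 : ∑ p, |y p| ≤ (2 * (s' : ℤ) * Δ + 1) ^ s'
    · exact ⟨1, fun _ => y, fun l => hcy, fun l => h0, fun l => h1, fun p => by simp,
        by simp⟩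
    push_neg at h1
    obtain ⟨u, hMu, hu0, huy, hnorm⟩ := split_cycle M Δ hΔ hM y hcy h1
    set w : Fin t' → ℤ := y - u with hw
    have hMw : M.mulVec w = 0 := by
      rw [hw, Matrix.mulVec_sub, hMu, hcy, sub_self]
    have hw0 : w ≠ 0 := by
      intro h
      apply huy
      funext p
      have h2 := congrFun h p
      simp only [hw, Pi.sub_apply, Pi.zero_apply] at h2
      linarith
    have hsplitnorm : ∑ p, |u p| + ∑ p, |w p| = ∑ p, |y p| := by
      rw [← Finset.sum_add_distrib]
      refine Finset.sum_congr rfl (fun p _ => ?_)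
      have h2 := hnorm p
      simp only [hw, Pi.sub_apply]
      linarith
    have hupos : 1 ≤ ∑ p, |u p| := by
      obtain ⟨p0, hp0⟩ := Function.ne_iff.mp hu0
      have h2 : u p0 ≠ 0 := by simpa using hp0
      calc (1:ℤ) ≤ |u p0| := Int.one_le_abs h2
        _ ≤ ∑ p, |u p| := Finset.single_le_sum (f := fun p => |u p|)
            (fun p _ => abs_nonneg _) (Finset.mem_univ _)
    have hwpos : 1 ≤ ∑ p, |w p| := by
      obtain ⟨p0, hp0⟩ := Function.ne_iff.mp hw0
      have h2 : w p0 ≠ 0 := by simpa using hp0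
      calc (1:ℤ) ≤ |w p0| := Int.one_le_abs h2
        _ ≤ ∑ p, |w p| := Finset.single_le_sum (f := fun p => |w p|)
            (fun p _ => abs_nonneg _) (Finset.mem_univ _)
    have hKy : ((∑ p, |y p|).toNat : ℤ) = ∑ p, |y p| :=
      Int.toNat_of_nonneg (Finset.sum_nonneg (fun p _ => abs_nonneg _))
    have hKu : ((∑ p, |u p|).toNat : ℤ) = ∑ p, |u p| :=
      Int.toNat_of_nonneg (Finset.sum_nonneg (fun p _ => abs_nonneg _))
    have hKw : ((∑ p, |w p|).toNat : ℤ) = ∑ p, |w p| :=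
      Int.toNat_of_nonneg (Finset.sum_nonneg (fun p _ => abs_nonneg _))
    have hlt1 : (∑ p, |u p|).toNat < K := by omega
    have hlt2 : (∑ p, |w p|).toNat < K := by omega
    obtain ⟨k1, g1, hg1c, hg1ne, hg1b, hg1s, hg1n⟩ := ih _ hlt1 u rfl hMu
    obtain ⟨k2, g2, hg2c, hg2ne, hg2b, hg2s, hg2n⟩ := ih _ hlt2 w rfl hMw
    refine ⟨k1 + k2, Fin.append g1 g2, ?_, ?_, ?_, ?_, ?_⟩
    · intro l
      refine Fin.addCases (fun i => ?_) (fun i => ?_) l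
      · rw [Fin.append_left]; exact hg1c i
      · rw [Fin.append_right]; exact hg2c i
    · intro l
      refine Fin.addCases (fun i => ?_) (fun i => ?_) l
      · rw [Fin.append_left]; exact hg1ne i
      · rw [Fin.append_right]; exact hg2ne i
    · intro l
      refine Fin.addCases (fun i => ?_) (fun i => ?_) l
      · rw [Fin.append_left]; exact hg1b i
      · rw [Fin.append_right]; exact hg2b i
    · intro p
      rw [Fin.sum_univ_add]
      rw [Finset.sum_congr rfl (fun i _ => by rw [Fin.append_left] :
        ∀ i ∈ Finset.univ, Fin.append g1 g2 (Fin.castAdd k2 i) p = g1 i p)]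
      rw [Finset.sum_congr rfl (fun i _ => by rw [Fin.append_right] :
        ∀ i ∈ Finset.univ, Fin.append g1 g2 (Fin.natAdd k1 i) p = g2 i p)]
      rw [hg1s p, hg2s p]
      simp [hw]
    · rw [Fin.sum_univ_add]
      rw [Finset.sum_congr rfl (fun i _ => by rw [Fin.append_left] :
        ∀ i ∈ Finset.univ, ∑ p, |Fin.append g1 g2 (Fin.castAdd k2 i) p| = ∑ p, |g1 i p|)]
      rw [Finset.sum_congr rfl (fun i _ => by rw [Fin.append_right] :
        ∀ i ∈ Finset.univ, ∑ p, |Fin.append g1 g2 (Fin.natAdd k1 i) p| = ∑ p, |g2 i p|)]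
      rw [hg1n, hg2n]
      exact hsplitnorm

end Decomp


/-- Every Graver basis element `y` of a generalized `n`-fold matrix with entries
bounded by `Δ` satisfies `‖y‖₁ ≤ L_B · (2rΔL_B + 1)^r`, with `L_B = (2sΔ+1)^s`. -/
theorem nfold_graver_l1_bound (n r s t : ℕ)
    (A : Fin n → Matrix (Fin r) (Fin t) ℤ)
    (B : Fin n → Matrix (Fin s) (Fin t) ℤ) (Δ : ℤ)
    (hA : ∀ i a j, |A i a j| ≤ Δ) (hB : ∀ i b j, |B i b j| ≤ Δ)
    (y : Fin n × Fin t → ℤ) (hy : InGraverBasis (nFoldMatrix A B) y) :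
    ∑ p, |y p| ≤
      (2 * (s : ℤ) * Δ + 1) ^ s *
        (2 * (r : ℤ) * Δ * (2 * (s : ℤ) * Δ + 1) ^ s + 1) ^ r := by
  classical
  obtain ⟨hcyc, hyne, hind⟩ := hy
  by_cases hnt : n = 0 ∨ t = 0
  · exfalso
    apply hyne
    funext q
    rcases hnt with h | h
    · subst h; exact q.1.elim0
    · subst h; exact q.2.elim0
  push_neg at hnt
  obtain ⟨hn0, ht0⟩ := hnt
  by_cases hΔ : 0 ≤ Δ
  case neg =>
    -- Δ < 0 forces r = 0 and s = 0
    have hr : r = 0 := by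
      by_contra h
      have h1 := hA ⟨0, Nat.pos_of_ne_zero hn0⟩ ⟨0, Nat.pos_of_ne_zero h⟩
        ⟨0, Nat.pos_of_ne_zero ht0⟩
      have h2 := abs_nonneg (A ⟨0, Nat.pos_of_ne_zero hn0⟩ ⟨0, Nat.pos_of_ne_zero h⟩
        ⟨0, Nat.pos_of_ne_zero ht0⟩)
      exact hΔ (le_trans h2 h1)
    have hs : s = 0 := by
      by_contra h
      have h1 := hB ⟨0, Nat.pos_of_ne_zero hn0⟩ ⟨0, Nat.pos_of_ne_zero h⟩
        ⟨0, Nat.pos_of_ne_zero ht0⟩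
      have h2 := abs_nonneg (B ⟨0, Nat.pos_of_ne_zero hn0⟩ ⟨0, Nat.pos_of_ne_zero h⟩
        ⟨0, Nat.pos_of_ne_zero ht0⟩)
      exact hΔ (le_trans h2 h1)
    subst hr
    subst hs
    rw [pow_zero, pow_zero, one_mul]
    have hcyc0 : ∀ v : Fin n × Fin t → ℤ, IsCycle (nFoldMatrix A B) v := by
      intro v
      funext i
      rcases i with a | ⟨b, c⟩
      · exact a.elim0
      · exact c.elim0
    by_contra hgt
    push_neg at hgt
    obtain ⟨q0, hq0⟩ : ∃ q0, y q0 ≠ 0 := by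
      by_contra hall
      push_neg at hall
      exact hyne (funext fun q => hall q)
    set u : Fin n × Fin t → ℤ := fun q => if q = q0 then (y q0).sign else 0 with hu
    have husum : ∑ q, |u q| = 1 := by
      rw [hu]
      have : ∀ q, |if q = q0 then (y q0).sign else 0| = if q = q0 then 1 else 0 := by
        intro q
        by_cases h : q = q0
        · rcases sign_cases (y q0) hq0 with h1 | h1 <;> simp [h, h1]
        · simp [h]
      rw [Finset.sum_congr rfl (fun q _ => this q), Finset.sum_ite_eq' Finset.univ q0 (fun _ => 1)]
      simp
    apply hind
    refine ⟨u, y - u, hcyc0 u, hcyc0 _, ?_, ?_, ?_, by funext q; simp⟩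
    · intro h
      have h2 : (if q0 = q0 then (y q0).sign else 0) = (0:ℤ) := congrFun h q0
      rw [if_pos rfl] at h2
      rcases sign_cases (y q0) hq0 with h1 | h1 <;> omega
    · intro h
      have h3 : y = u := by
        funext q
        have h2 := congrFun h q
        simp only [Pi.sub_apply, Pi.zero_apply] at h2
        linarith
      rw [h3] at hgt
      omega
    · intro q
      simp only [Pi.sub_apply]
      by_cases h : q = q0
      · rw [h]
        have hval : u q0 = (y q0).sign := by rw [hu]; exact if_pos rfl
        rw [hval]
        rcases lt_trichotomy (y q0) 0 with h1 | h1 | h1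
        · rw [Int.sign_eq_neg_one_of_neg h1]; omega
        · exact absurd h1 hq0
        · rw [Int.sign_eq_one_of_pos h1]; omega
      · have hval : u q = 0 := by rw [hu]; exact if_neg h
        rw [hval]
        simp
  case pos =>
    set LB : ℤ := (2 * (s : ℤ) * Δ + 1) ^ s with hLB
    have hLBpos : 0 < LB := pow_pos (by positivity) s
    have hLB1 : 1 ≤ LB := hLBpos
    -- bricks are cycles of the B's
    have hbrick : ∀ i : Fin n, (B i).mulVec (fun p => y (i, p)) = 0 := by
      intro i
      funext cc
      have h2 := congrFun hcyc (Sum.inr (i, cc))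
      simp only [Matrix.mulVec, dotProduct, nFoldMatrix, Matrix.of_apply,
        Pi.zero_apply] at h2 ⊢
      rw [Fintype.sum_prod_type] at h2
      rw [Finset.sum_eq_single i (fun i' _ hi' => by
        rw [Finset.sum_eq_zero]
        intro p _
        rw [if_neg (Ne.symm hi'), zero_mul]) (fun h => absurd (Finset.mem_univ i) h)] at h2
      simp only [if_pos rfl] at h2
      exact h2
    have hdec := fun i : Fin n => graver_decomp (B i) Δ hΔ (fun a p => hB i a p) _
      (fun p => y (i, p)) rfl (hbrick i)
    choose k g hgc hgne hgb hgs hgn using hdec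
    set J := (Σ i : Fin n, Fin (k i)) with hJty
    set h : J → (Fin n × Fin t → ℤ) :=
      fun l q => if q.1 = l.1 then g l.1 l.2 q.2 else 0 with hh
    have hsum_pt : ∀ q : Fin n × Fin t, ∑ l : J, h l q = y q := by
      intro q
      rw [← Finset.univ_sigma_univ, Finset.sum_sigma]
      have hterm : ∀ i : Fin n, (∑ l : Fin (k i), h ⟨i, l⟩ q) =
          if q.1 = i then y (i, q.2) else 0 := by
        intro i
        by_cases hqi : q.1 = i
        · simp only [hh, hqi, if_pos rfl]
          exact hgs i q.2
        · simp [hh, hqi]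
      rw [Finset.sum_congr rfl (fun i _ => hterm i), Finset.sum_ite_eq Finset.univ q.1
        (fun i => y (i, q.2))]
      simp
    have hnorm_piece : ∀ l : J, ∑ q : Fin n × Fin t, |h l q| = ∑ p, |g l.1 l.2 p| := by
      intro l
      rw [Fintype.sum_prod_type]
      have hterm : ∀ i, (∑ p : Fin t, |h l (i, p)|) =
          if i = l.1 then ∑ p, |g l.1 l.2 p| else 0 := by
        intro i
        by_cases hi : i = l.1
        · simp [hh, hi]
        · simp [hh, hi]
      rw [Finset.sum_congr rfl (fun i _ => hterm i), Finset.sum_ite_eq' Finset.univ l.1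
        (fun i => ∑ p, |g l.1 l.2 p|)]
      simp
    have htot : ∑ l : J, ∑ q, |h l q| = ∑ q, |y q| := by
      rw [Finset.sum_congr rfl (fun l _ => hnorm_piece l)]
      rw [← Finset.univ_sigma_univ, Finset.sum_sigma]
      rw [Finset.sum_congr rfl (fun i _ => hgn i)]
      rw [Fintype.sum_prod_type]
    have halign : ∀ q, ∑ l : J, |h l q| = |y q| := by
      have hle : ∀ q, |y q| ≤ ∑ l : J, |h l q| := by
        intro q
        calc |y q| = |∑ l : J, h l q| := by rw [hsum_pt q]
          _ ≤ ∑ l : J, |h l q| := Finset.abs_sum_le_sum_abs _ _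
      have hswap : ∑ q, ∑ l : J, |h l q| = ∑ q, |y q| := by
        rw [Finset.sum_comm]
        exact htot
      intro q
      by_contra hne2
      have hlt : |y q| < ∑ l : J, |h l q| := lt_of_le_of_ne (hle q) (fun h2 => hne2 h2.symm)
      have h3 : ∑ q, |y q| < ∑ q, ∑ l : J, |h l q| :=
        Finset.sum_lt_sum (fun q _ => hle q) ⟨q, Finset.mem_univ q, hlt⟩
      rw [hswap] at h3
      exact lt_irrefl _ h3
    have hsign : ∀ q, (∀ l : J, 0 ≤ h l q) ∨ (∀ l : J, h l q ≤ 0) := by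
      intro q
      have h2 := same_sign_of_sum_abs Finset.univ (fun l : J => h l q)
        (by rw [hsum_pt q]; exact halign q)
      rcases h2 with h2 | h2
      · exact Or.inl (fun l => h2 l (Finset.mem_univ l))
      · exact Or.inr (fun l => h2 l (Finset.mem_univ l))
    set v : J → Fin r → ℤ := fun l a => ∑ p, A l.1 a p * g l.1 l.2 p with hv
    have hvb : ∀ (l : J) (a : Fin r), |v l a| ≤ Δ * LB := by
      intro l a
      calc |∑ p, A l.1 a p * g l.1 l.2 p| ≤ ∑ p, |A l.1 a p * g l.1 l.2 p| :=
            Finset.abs_sum_le_sum_abs _ _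
        _ ≤ ∑ p, Δ * |g l.1 l.2 p| := Finset.sum_le_sum (fun p _ => by
            rw [abs_mul]
            exact mul_le_mul_of_nonneg_right (hA _ _ _) (abs_nonneg _))
        _ = Δ * ∑ p, |g l.1 l.2 p| := (Finset.mul_sum _ _ _).symm
        _ ≤ Δ * LB := mul_le_mul_of_nonneg_left (hgb l.1 l.2) hΔ
    have hpiece_row : ∀ (l : J) (a : Fin r),
        (∑ q : Fin n × Fin t, A q.1 a q.2 * h l q) = v l a := by
      intro l a
      rw [Fintype.sum_prod_type]
      have hterm : ∀ i, (∑ p : Fin t, A i a p * h l (i, p)) =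
          if i = l.1 then v l a else 0 := by
        intro i
        by_cases hi : i = l.1
        · subst hi
          simp [hh, hv]
        · simp [hh, hi]
      rw [Finset.sum_congr rfl (fun i _ => hterm i), Finset.sum_ite_eq' Finset.univ l.1
        (fun _ => v l a)]
      simp
    have hvsum : ∑ l : J, v l = 0 := by
      funext a
      rw [Finset.sum_apply]
      have h2 := congrFun hcyc (Sum.inl a)
      simp only [Matrix.mulVec, dotProduct, nFoldMatrix, Matrix.of_apply,
        Pi.zero_apply] at h2
      have h3 : ∑ q : Fin n × Fin t, A q.1 a q.2 * y q = 0 := h2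
      simp only [Pi.zero_apply]
      calc ∑ l : J, v l a = ∑ l : J, ∑ q : Fin n × Fin t, A q.1 a q.2 * h l q :=
            Finset.sum_congr rfl (fun l _ => (hpiece_row l a).symm)
        _ = ∑ q : Fin n × Fin t, ∑ l : J, A q.1 a q.2 * h l q := Finset.sum_comm
        _ = ∑ q : Fin n × Fin t, A q.1 a q.2 * y q := Finset.sum_congr rfl (fun q _ => by
            rw [← Finset.mul_sum, hsum_pt q])
        _ = 0 := h3
    have hpiece_block : ∀ (l : J) (b : Fin n) (cc : Fin s),
        (∑ q : Fin n × Fin t, (if b = q.1 then B b cc q.2 else 0) * h l q) = 0 := by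
      intro l b cc
      rw [Fintype.sum_prod_type]
      have hterm : ∀ i, (∑ p : Fin t, (if b = i then B b cc p else 0) * h l (i, p)) =
          if i = l.1 then (if b = i then ∑ p, B b cc p * g l.1 l.2 p else 0) else 0 := by
        intro i
        by_cases hi : i = l.1
        · by_cases hbi : b = i
          · simp [hh, hi, hbi]
          · simp [hh, hi, hbi]
        · simp [hh, hi]
      rw [Finset.sum_congr rfl (fun i _ => hterm i), Finset.sum_ite_eq' Finset.univ l.1 _]
      simp only [Finset.mem_univ, if_true]
      by_cases hbl : b = l.1
      · subst hbl
        rw [if_pos rfl]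
        have h4 := congrFun (hgc l.1 l.2) cc
        simp only [Matrix.mulVec, dotProduct, Pi.zero_apply] at h4
        exact h4
      · rw [if_neg hbl]
    have hcycle_of : ∀ T : Finset J, (∀ a, ∑ l ∈ T, v l a = 0) →
        IsCycle (nFoldMatrix A B) (fun q => ∑ l ∈ T, h l q) := by
      intro T hT
      funext i
      rcases i with a | ⟨b, cc⟩
      · show (∑ q : Fin n × Fin t, nFoldMatrix A B (Sum.inl a) q * (∑ l ∈ T, h l q)) = 0
        have hent : ∀ q : Fin n × Fin t, nFoldMatrix A B (Sum.inl a) q = A q.1 a q.2 :=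
          fun q => rfl
        calc ∑ q : Fin n × Fin t, nFoldMatrix A B (Sum.inl a) q * (∑ l ∈ T, h l q)
            = ∑ q : Fin n × Fin t, ∑ l ∈ T, A q.1 a q.2 * h l q := Finset.sum_congr rfl
              (fun q _ => by rw [hent q, Finset.mul_sum])
          _ = ∑ l ∈ T, ∑ q : Fin n × Fin t, A q.1 a q.2 * h l q := Finset.sum_comm
          _ = ∑ l ∈ T, v l a := Finset.sum_congr rfl (fun l _ => hpiece_row l a)
          _ = 0 := hT a
      · show (∑ q : Fin n × Fin t, nFoldMatrix A B (Sum.inr (b, cc)) q * (∑ l ∈ T, h l q)) = 0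
        have hent : ∀ q : Fin n × Fin t, nFoldMatrix A B (Sum.inr (b, cc)) q =
            (if b = q.1 then B b cc q.2 else 0) := fun q => rfl
        calc ∑ q : Fin n × Fin t, nFoldMatrix A B (Sum.inr (b, cc)) q * (∑ l ∈ T, h l q)
            = ∑ q : Fin n × Fin t, ∑ l ∈ T, (if b = q.1 then B b cc q.2 else 0) * h l q :=
              Finset.sum_congr rfl (fun q _ => by rw [hent q, Finset.mul_sum])
          _ = ∑ l ∈ T, ∑ q : Fin n × Fin t, (if b = q.1 then B b cc q.2 else 0) * h l q :=
              Finset.sum_comm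
          _ = 0 := Finset.sum_eq_zero (fun l _ => hpiece_block l b cc)
    by_cases hbig : (2 * (r:ℤ) * (Δ * LB) + 1) ^ r < (Fintype.card J : ℤ)
    · exfalso
      obtain ⟨S, hSne, hSuniv, hSsum⟩ := exists_zero_sum_subset v (Δ * LB)
        (mul_nonneg hΔ hLBpos.le) hvb hvsum hbig
      have hSsum' : ∀ a, ∑ l ∈ S, v l a = 0 := by
        intro a
        have := congrFun hSsum a
        rw [Finset.sum_apply] at this
        exact this
      have hCsum' : ∀ a, ∑ l ∈ Sᶜ, v l a = 0 := by
        intro a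
        have h5 := congrFun hvsum a
        rw [Finset.sum_apply] at h5
        rw [← Finset.sum_add_sum_compl S (fun l => v l a)] at h5
        rw [hSsum' a] at h5
        simpa using h5
      have hpiece_ne : ∀ (T : Finset J), T.Nonempty → (fun q => ∑ l ∈ T, h l q) ≠ 0 := by
        intro T ⟨l0, hl0⟩ habs
        obtain ⟨p0, hp0⟩ := Function.ne_iff.mp (hgne l0.1 l0.2)
        have hval : h l0 (l0.1, p0) = g l0.1 l0.2 p0 := by
          simp [hh]
        have hzero : ∑ l ∈ T, h l (l0.1, p0) = 0 := by
          have := congrFun habs (l0.1, p0)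
          simpa using this
        rcases hsign (l0.1, p0) with hpos | hneg
        · have h5 : 0 < h l0 (l0.1, p0) :=
            lt_of_le_of_ne (hpos l0) (by rw [hval]; exact fun h6 => hp0 h6.symm)
          have h6 : h l0 (l0.1, p0) ≤ ∑ l ∈ T, h l (l0.1, p0) :=
            Finset.single_le_sum (f := fun l => h l (l0.1, p0)) (fun l _ => hpos l) hl0
          omega
        · have h5 : h l0 (l0.1, p0) < 0 :=
            lt_of_le_of_ne (hneg l0) (by rw [hval]; exact fun h6 => hp0 h6)
          have h6 : h l0 (l0.1, p0) + ∑ l ∈ T.erase l0, h l (l0.1, p0) =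
              ∑ l ∈ T, h l (l0.1, p0) := Finset.add_sum_erase T (fun l => h l (l0.1, p0)) hl0
          have h7 : ∑ l ∈ T.erase l0, h l (l0.1, p0) ≤ 0 :=
            Finset.sum_nonpos (fun l _ => hneg l)
          omega
      apply hind
      refine ⟨fun q => ∑ l ∈ S, h l q, fun q => ∑ l ∈ Sᶜ, h l q,
        hcycle_of S hSsum', hcycle_of Sᶜ hCsum', hpiece_ne S hSne, ?_, ?_, ?_⟩
      · refine hpiece_ne Sᶜ ?_
        obtain ⟨l1, hl1⟩ : ∃ l1 : J, l1 ∉ S := by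
          by_contra hall
          push_neg at hall
          exact hSuniv (Finset.eq_univ_iff_forall.mpr hall)
        exact ⟨l1, Finset.mem_compl.mpr hl1⟩
      · intro q
        rcases hsign q with hpos | hneg
        · exact mul_nonneg (Finset.sum_nonneg (fun l _ => hpos l))
            (Finset.sum_nonneg (fun l _ => hpos l))
        · have ha : ∑ l ∈ S, h l q ≤ 0 := Finset.sum_nonpos (fun l _ => hneg l)
          have hb2 : ∑ l ∈ Sᶜ, h l q ≤ 0 := Finset.sum_nonpos (fun l _ => hneg l)
          nlinarith
      · funext q
        rw [Pi.add_apply, Finset.sum_add_sum_compl S (fun l => h l q), hsum_pt q]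
    · push_neg at hbig
      have hfinal : ∑ q, |y q| ≤ (Fintype.card J : ℤ) * LB := by
        calc ∑ q, |y q| = ∑ l : J, ∑ q, |h l q| := htot.symm
          _ ≤ ∑ l : J, LB := Finset.sum_le_sum (fun l _ => by
              rw [hnorm_piece l]; exact hgb l.1 l.2)
          _ = (Fintype.card J : ℤ) * LB := by
              rw [Finset.sum_const, Finset.card_univ, nsmul_eq_mul]
      have hstep : (Fintype.card J : ℤ) * LB ≤ (2 * (r:ℤ) * (Δ * LB) + 1) ^ r * LB :=
        mul_le_mul_of_nonneg_right hbig hLBpos.le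
      have hring : (2 * (r:ℤ) * (Δ * LB) + 1) = (2 * (r:ℤ) * Δ * LB + 1) := by ring
      rw [hring] at hstep
      calc ∑ q, |y q| ≤ (2 * (r:ℤ) * Δ * LB + 1) ^ r * LB := le_trans hfinal hstep
        _ = LB * (2 * (r:ℤ) * Δ * LB + 1) ^ r := mul_comm _ _
end

section
/- Let A ∈ ℤ^{m×n} and let z ∈ ℤ^n be a cycle of A, i.e. Az = 0. Then z can be written as z = Σ_{i=1}^{2n} λ_i g_i, where each λ_i is a nonnegative integer and each g_i is either the zero vector or an element of the Graver basis of A that is sign-compatible with z. -/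
/-! Among the decompositions of `z` into Graver elements conformal to `z`, pick one with the
largest number `N` of parts; `N` is bounded because the parts are nonzero and their ℓ¹-norms
add up to that of `z`. Its multiplicities are a nonnegative rational solution of
`∑ λ_g • g = z`; moving along kernel directions (in the sense that does not decrease `∑ λ_g`)
yields a solution `λ'` with linearly independent support `T`, so `#T ≤ n`, and `N ≤ ∑ λ'_g`.
Rounding down leaves a cycle `r = z - ∑ ⌊λ'_g⌋ • g` which is again conformal to `z`.
A decomposition of `r` together with the rounded parts decomposes `z`, so by maximality `r`
needs at most `N - ∑ ⌊λ'_g⌋ ≤ #T` parts. -/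

open Finset

/-- The conformal order `g ⊑ z`. -/
def IsConformal {ι α : Type*} [Lattice α] [Zero α] (g z : ι → α) : Prop :=
  ∀ j, g j ∈ Set.uIcc 0 (z j)

namespace IsConformal

variable {ι : Type*}

theorem refl {α : Type*} [Lattice α] [Zero α] (z : ι → α) : IsConformal z z :=
  fun _ => Set.right_mem_uIcc

theorem trans {α : Type*} [Lattice α] [Zero α] {g r z : ι → α}
    (hgr : IsConformal g r) (hrz : IsConformal r z) : IsConformal g z :=
  fun j => Set.uIcc_subset_uIcc_left (hrz j) (hgr j)

theorem sub_left {g z : ι → ℤ} (h : IsConformal g z) : IsConformal (z - g) z := by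
  intro j
  have := Set.mem_uIcc.mp (h j)
  simp only [Set.mem_uIcc, Pi.sub_apply]
  omega

theorem signCompat {g z : ι → ℤ} (h : IsConformal g z) : SignCompat g z := by
  intro j
  rcases Set.mem_uIcc.mp (h j) with ⟨h0, h1⟩ | ⟨h0, h1⟩ <;> nlinarith

theorem intCast_iff {K : Type*} [Ring K] [LinearOrder K] [IsStrictOrderedRing K]
    {g z : ι → ℤ} : IsConformal (fun j => (g j : K)) (fun j => (z j : K)) ↔ IsConformal g z := by
  simp only [IsConformal, Set.mem_uIcc]
  exact forall_congr' fun j => by norm_cast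

end IsConformal

namespace SignCompat

variable {ι : Type*} {u v : ι → ℤ}

theorem isConformal_add_left (h : SignCompat u v) : IsConformal u (u + v) := by
  intro j
  have := mul_nonneg_iff.mp (h j)
  simp only [Set.mem_uIcc, Pi.add_apply]
  omega

theorem isConformal_add_right (h : SignCompat u v) : IsConformal v (u + v) := by
  intro j
  have := mul_nonneg_iff.mp (h j)
  simp only [Set.mem_uIcc, Pi.add_apply]
  omega

end SignCompat

theorem Int.sign_mul_eq_abs_of_mem_uIcc {a b : ℤ} (h : b ∈ Set.uIcc 0 a) : a.sign * b = |b| := by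
  rcases lt_trichotomy a 0 with ha | rfl | ha
  · rw [Set.uIcc_of_ge ha.le] at h
    rw [Int.sign_eq_neg_one_of_neg ha, abs_of_nonpos h.2, neg_one_mul]
  · simp_all
  · rw [Set.uIcc_of_le ha.le] at h
    rw [Int.sign_eq_one_of_pos ha, abs_of_nonneg h.1, one_mul]

def castVec {ι : Type*} : (ι → ℤ) →+ (ι → ℚ) := (Int.castAddHom ℚ).compLeft ι

@[simp] theorem castVec_apply {ι : Type*} (g : ι → ℤ) (j : ι) : castVec g j = g j := rfl

section Weight

variable {ι : Type*} [Fintype ι]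

def l1Norm (z : ι → ℤ) : ℕ := ∑ j, (z j).natAbs

theorem l1Norm_add_of_signCompat {u v : ι → ℤ} (h : SignCompat u v) :
    l1Norm (u + v) = l1Norm u + l1Norm v := by
  simp only [l1Norm, ← sum_add_distrib, Pi.add_apply]
  refine sum_congr rfl fun j _ => ?_
  have := mul_nonneg_iff.mp (h j)
  omega

theorem l1Norm_pos {g : ι → ℤ} (h : g ≠ 0) : 0 < l1Norm g := by
  obtain ⟨j, hj⟩ := Function.ne_iff.mp h
  exact sum_pos' (fun _ _ => Nat.zero_le _) ⟨j, mem_univ j, Int.natAbs_pos.mpr hj⟩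

/-- A linear functional that agrees with the ℓ¹-norm on vectors conformal to `z`. -/
def signWeight (z : ι → ℤ) : (ι → ℚ) →ₗ[ℚ] ℚ := ∑ j, ((z j).sign : ℚ) • LinearMap.proj j

theorem signWeight_apply (z : ι → ℤ) (x : ι → ℚ) :
    signWeight z x = ∑ j, ((z j).sign : ℚ) * x j := by
  simp only [signWeight, LinearMap.coe_sum, LinearMap.coe_smul, LinearMap.coe_proj,
    Finset.sum_apply, Pi.smul_apply, Function.eval, smul_eq_mul]

theorem IsConformal.signWeight_castVec {g z : ι → ℤ} (h : IsConformal g z) :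
    signWeight z (castVec g) = l1Norm g := by
  simp only [signWeight_apply, castVec_apply, l1Norm, Nat.cast_sum, Nat.cast_natAbs]
  exact sum_congr rfl fun j _ => by exact_mod_cast Int.sign_mul_eq_abs_of_mem_uIcc (h j)

theorem IsConformal.one_le_signWeight_castVec {g z : ι → ℤ} (h : IsConformal g z) (hg : g ≠ 0) :
    1 ≤ signWeight z (castVec g) := by
  rw [h.signWeight_castVec]
  exact_mod_cast l1Norm_pos hg

end Weight

section GraverDecomposition

variable {R C : Type*} [Fintype C] (A : Matrix R C ℤ)

def IsGraverDecomposition (z : C → ℤ) (s : Multiset (C → ℤ)) : Prop :=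
  s.sum = z ∧ ∀ g ∈ s, InGraverBasis A g ∧ IsConformal g z

variable {A}

theorem exists_isGraverDecomposition {z : C → ℤ} (hz : IsCycle A z) :
    ∃ s, IsGraverDecomposition A z s := by
  by_cases h0 : z = 0
  · exact ⟨0, by simp [h0], by simp⟩
  by_cases hG : InGraverBasis A z
  · exact ⟨{z}, by simp, by simp [hG, IsConformal.refl]⟩
  obtain ⟨u, v, hu, hv, hu0, hv0, huv, hzuv⟩ : ∃ u v : C → ℤ, IsCycle A u ∧ IsCycle A v ∧
      u ≠ 0 ∧ v ≠ 0 ∧ SignCompat u v ∧ z = u + v := by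
    simpa [InGraverBasis, hz, h0] using hG
  have : l1Norm z = l1Norm u + l1Norm v := hzuv ▸ l1Norm_add_of_signCompat huv
  have := l1Norm_pos hu0
  have := l1Norm_pos hv0
  obtain ⟨s, hs_sum, hs⟩ := exists_isGraverDecomposition hu
  obtain ⟨t, ht_sum, ht⟩ := exists_isGraverDecomposition hv
  subst hzuv
  refine ⟨s + t, by rw [Multiset.sum_add, hs_sum, ht_sum], fun g hg => ?_⟩
  rcases Multiset.mem_add.mp hg with hg | hg
  · exact ⟨(hs g hg).1, (hs g hg).2.trans huv.isConformal_add_left⟩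
  · exact ⟨(ht g hg).1, (ht g hg).2.trans huv.isConformal_add_right⟩
termination_by l1Norm z
decreasing_by all_goals omega

theorem IsGraverDecomposition.card_le {z : C → ℤ} {s : Multiset (C → ℤ)}
    (hs : IsGraverDecomposition A z s) : Multiset.card s ≤ l1Norm z := by
  let w : (C → ℤ) →+ ℚ := (signWeight z).toAddMonoidHom.comp castVec
  have hw : ∀ x ∈ s.map w, (1 : ℚ) ≤ x := by
    simp only [Multiset.mem_map, forall_exists_index, and_imp, forall_apply_eq_imp_iff₂]
    exact fun g hg => (hs.2 g hg).2.one_le_signWeight_castVec (hs.2 g hg).1.2.1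
  have := Multiset.card_nsmul_le_sum hw
  rw [← map_multiset_sum, hs.1, Multiset.card_map, nsmul_one] at this
  simpa [w, (IsConformal.refl z).signWeight_castVec] using this

theorem exists_isGraverDecomposition_card_maximal {z : C → ℤ} (hz : IsCycle A z) :
    ∃ s, IsGraverDecomposition A z s ∧
      ∀ t, IsGraverDecomposition A z t → Multiset.card t ≤ Multiset.card s := by
  classical
  let P k := ∃ s, IsGraverDecomposition A z s ∧ Multiset.card s = k
  obtain ⟨s₀, hs₀⟩ := exists_isGraverDecomposition hz
  obtain ⟨s, hs, hcard⟩ := Nat.findGreatest_spec (P := P) hs₀.card_le ⟨s₀, hs₀, rfl⟩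
  exact ⟨s, hs, fun t ht => hcard ▸ Nat.le_findGreatest ht.card_le ⟨t, ht, rfl⟩⟩

end GraverDecomposition

section ConicReduction

variable {K V ι : Type*} [Field K] [LinearOrder K] [IsStrictOrderedRing K]
  [AddCommGroup V] [Module K V] {v : ι → V} {s : Finset ι}

theorem exists_neg_of_sum_smul_eq_zero (φ : V →ₗ[K] K) (hφ : ∀ i ∈ s, 0 < φ (v i))
    {d : ι → K} (hd : ∑ i ∈ s, d i • v i = 0) (hne : ∃ i ∈ s, d i ≠ 0) :
    ∃ i ∈ s, d i < 0 := by
  by_contra! hnn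
  have hsum : ∑ i ∈ s, d i * φ (v i) = 0 := by simpa using congrArg φ hd
  obtain ⟨i, hi, hdi⟩ := hne
  have := (sum_eq_zero_iff_of_nonneg fun j hj => mul_nonneg (hnn j hj) (hφ j hj).le).mp hsum i hi
  exact hdi (by simpa [(hφ i hi).ne'] using this)

theorem exists_erase_sum_smul_eq [DecidableEq ι] {c d : ι → K} (hc : ∀ i ∈ s, 0 ≤ c i)
    (hd : ∑ i ∈ s, d i • v i = 0) (hd_sum : 0 ≤ ∑ i ∈ s, d i) (hneg : ∃ i ∈ s, d i < 0) :
    ∃ i ∈ s, ∃ c' : ι → K, (∀ j ∈ s.erase i, 0 ≤ c' j) ∧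
      ∑ j ∈ s.erase i, c' j • v j = ∑ j ∈ s, c j • v j ∧
      ∑ j ∈ s, c j ≤ ∑ j ∈ s.erase i, c' j := by
  -- ratio test: walk from `c` along `d` until the first coefficient reaches zero
  obtain ⟨i, hiF, hmin⟩ := (s.filter fun i => d i < 0).exists_min_image (fun i => c i / -d i)
    (by obtain ⟨i, hi, h⟩ := hneg; exact ⟨i, mem_filter.mpr ⟨hi, h⟩⟩)
  obtain ⟨his, hdi⟩ := mem_filter.mp hiF
  set t := c i / -d i
  have ht : 0 ≤ t := div_nonneg (hc i his) (neg_nonneg.mpr hdi.le)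
  have hc' : ∀ j ∈ s, 0 ≤ c j + t * d j := by
    intro j hj
    rcases le_or_gt 0 (d j) with h | h
    · exact add_nonneg (hc j hj) (mul_nonneg ht h)
    · have := hmin j (mem_filter.mpr ⟨hj, h⟩)
      rw [le_div_iff₀ (neg_pos.mpr h)] at this
      linarith
  have hci : c i + t * d i = 0 := by
    simp only [t]
    field_simp [hdi.ne]
    ring
  refine ⟨i, his, fun j => c j + t * d j, fun j hj => hc' j (mem_of_mem_erase hj), ?_, ?_⟩
  · rw [sum_erase s (by simp only [hci, zero_smul])]
    simp only [add_smul, sum_add_distrib, mul_smul, ← smul_sum, hd, smul_zero, add_zero]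
  · rw [sum_erase s hci, sum_add_distrib, ← mul_sum]
    linarith [mul_nonneg ht hd_sum]

theorem exists_linearIndepOn_sum_smul_eq (φ : V →ₗ[K] K) (hφ : ∀ i ∈ s, 0 < φ (v i))
    {c : ι → K} (hc : ∀ i ∈ s, 0 ≤ c i) :
    ∃ t ⊆ s, ∃ c' : ι → K, LinearIndepOn K v t ∧ (∀ i ∈ t, 0 ≤ c' i) ∧
      ∑ i ∈ t, c' i • v i = ∑ i ∈ s, c i • v i ∧ ∑ i ∈ s, c i ≤ ∑ i ∈ t, c' i := by
  classical
  induction s using Finset.strongInduction generalizing c with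
  | H s ih =>
  by_cases hli : LinearIndepOn K v s
  · exact ⟨s, subset_rfl, c, hli, hc, rfl, le_rfl⟩
  obtain ⟨d, hd, hne, hd_sum⟩ : ∃ d : ι → K, ∑ i ∈ s, d i • v i = 0 ∧ (∃ i ∈ s, d i ≠ 0) ∧
      0 ≤ ∑ i ∈ s, d i := by
    obtain ⟨d, hd, hne⟩ := not_linearIndepOn_finset_iff.mp hli
    rcases le_total 0 (∑ i ∈ s, d i) with h | h
    · exact ⟨d, hd, hne, h⟩
    · exact ⟨-d, by simp [neg_smul, hd], by simpa using hne, by simpa using h⟩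
  obtain ⟨i, hi, c', hc', hsum, hobj⟩ :=
    exists_erase_sum_smul_eq hc hd hd_sum (exists_neg_of_sum_smul_eq_zero φ hφ hd hne)
  obtain ⟨t, hts, c'', hli, hc'', hsum', hobj'⟩ :=
    ih (s.erase i) (erase_ssubset hi) (fun j hj => hφ j (mem_of_mem_erase hj)) hc'
  exact ⟨t, hts.trans (erase_subset _ _), c'', hli, hc'', hsum'.trans hsum, hobj.trans hobj'⟩

end ConicReduction

section Rounding

theorem sum_mul_mem_uIcc_of_le {K ι : Type*} [Ring K] [LinearOrder K] [IsOrderedRing K]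
    {s : Finset ι} {a : K} {x c k : ι → K} (hx : ∀ i ∈ s, x i ∈ Set.uIcc 0 a)
    (hk : ∀ i ∈ s, 0 ≤ k i ∧ k i ≤ c i) (hc : ∑ i ∈ s, c i * x i = a) :
    ∑ i ∈ s, k i * x i ∈ Set.uIcc 0 a := by
  rcases le_total 0 a with ha | ha
  · simp only [Set.uIcc_of_le ha, Set.mem_Icc] at hx ⊢
    exact ⟨sum_nonneg fun i hi => mul_nonneg (hk i hi).1 (hx i hi).1,
      hc ▸ sum_le_sum fun i hi => mul_le_mul_of_nonneg_right (hk i hi).2 (hx i hi).1⟩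
  · simp only [Set.uIcc_of_ge ha, Set.mem_Icc] at hx ⊢
    exact ⟨hc ▸ sum_le_sum fun i hi => mul_le_mul_of_nonpos_right (hk i hi).2 (hx i hi).2,
      sum_nonpos fun i hi => mul_nonpos_of_nonneg_of_nonpos (hk i hi).1 (hx i hi).2⟩

theorem IsConformal.sum_smul_of_le {K ι κ : Type*} [Ring K] [LinearOrder K] [IsOrderedRing K]
    {s : Finset ι} {z : κ → K} {x : ι → κ → K} {c k : ι → K}
    (hx : ∀ i ∈ s, IsConformal (x i) z) (hk : ∀ i ∈ s, 0 ≤ k i ∧ k i ≤ c i)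
    (hc : ∑ i ∈ s, c i • x i = z) : IsConformal (∑ i ∈ s, k i • x i) z := by
  intro j
  simp only [Finset.sum_apply, Pi.smul_apply, smul_eq_mul]
  exact sum_mul_mem_uIcc_of_le (fun i hi => hx i hi j) hk (by simpa using congrFun hc j)

theorem isConformal_sum_floor_smul {ι : Type*} {t : Finset (ι → ℤ)} {z : ι → ℤ} {c : (ι → ℤ) → ℚ}
    (ht : ∀ g ∈ t, IsConformal g z) (hc : ∀ g ∈ t, 0 ≤ c g)
    (hcz : ∑ g ∈ t, c g • castVec g = castVec z) :
    IsConformal (∑ g ∈ t, ⌊c g⌋₊ • g) z := by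
  rw [← IsConformal.intCast_iff (K := ℚ)]
  have := IsConformal.sum_smul_of_le (k := fun g => (⌊c g⌋₊ : ℚ))
    (fun g hg => IsConformal.intCast_iff.mpr (ht g hg))
    (fun g hg => ⟨Nat.cast_nonneg _, Nat.floor_le (hc g hg)⟩) hcz
  convert this using 1
  ext j
  simp only [Finset.sum_apply, Pi.smul_apply, smul_eq_mul, nsmul_eq_mul, Pi.mul_apply,
    Pi.natCast_apply, Int.cast_sum, Int.cast_mul, Int.cast_natCast]

theorem le_card_of_sum_floor_add_le {K ι : Type*} [Field K] [LinearOrder K]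
    [IsStrictOrderedRing K] [FloorSemiring K] {t : Finset ι} {c : ι → K} {m N : ℕ}
    (hN : (N : K) ≤ ∑ i ∈ t, c i) (h : ∑ i ∈ t, ⌊c i⌋₊ + m ≤ N) : m ≤ t.card := by
  have h_floor : ∑ i ∈ t, c i ≤ ∑ i ∈ t, ((⌊c i⌋₊ : K) + 1) :=
    sum_le_sum fun i _ => (Nat.lt_floor_add_one _).le
  rw [sum_add_distrib, sum_const, nsmul_one] at h_floor
  have h' : ((∑ i ∈ t, ⌊c i⌋₊ + m : ℕ) : K) ≤ N := by exact_mod_cast h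
  push_cast at h'
  exact_mod_cast (by linarith : (m : K) ≤ t.card)

end Rounding

theorem Multiset.exists_fin_sum_map_eq {α M : Type*} [AddCommMonoid M] (P : Multiset α) {k : ℕ}
    (hk : Multiset.card P ≤ k) (d : α) (F : α → M) (hF : F d = 0) :
    ∃ f : Fin k → α, (∀ i, f i ∈ P ∨ f i = d) ∧ ∑ i, F (f i) = (P.map F).sum := by
  obtain ⟨l, rfl, hl_mem, hl_sum⟩ : ∃ l : List α, l.length = k ∧ (∀ x ∈ l, x ∈ P ∨ x = d) ∧
      (l.map F).sum = (P.map F).sum := by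
    refine ⟨P.toList ++ List.replicate (k - Multiset.card P) d, by simp; omega, ?_, ?_⟩
    · simp +contextual [or_imp]
    · simp [hF, ← Multiset.sum_map_toList]
  exact ⟨fun i => l[i.1], fun i => hl_mem _ (List.getElem_mem _),
    (Fin.sum_univ_fun_getElem l F).trans hl_sum⟩

theorem isCycle_iff_mem_ker {R C : Type*} [Fintype C] {A : Matrix R C ℤ} {y : C → ℤ} :
    IsCycle A y ↔ y ∈ LinearMap.ker A.mulVecLin :=
  Iff.rfl

section Main

variable {R C : Type*} [Fintype C] {A : Matrix R C ℤ}

theorem IsGraverDecomposition.sum_count_smul_castVec [DecidableEq C] {z : C → ℤ}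
    {s : Multiset (C → ℤ)} (hs : IsGraverDecomposition A z s) :
    ∑ g ∈ s.toFinset, (s.count g : ℚ) • castVec g = castVec z := by
  simp only [← hs.1, Finset.sum_multiset_count s, map_sum, map_nsmul, Nat.cast_smul_eq_nsmul]

theorem isGraverDecomposition_add_sum_replicate {z : C → ℤ} {t : Finset (C → ℤ)}
    {a : (C → ℤ) → ℕ} {r : Multiset (C → ℤ)} (ht : ∀ g ∈ t, InGraverBasis A g ∧ IsConformal g z)
    (hy : IsConformal (∑ g ∈ t, a g • g) z)
    (hr : IsGraverDecomposition A (z - ∑ g ∈ t, a g • g) r) :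
    IsGraverDecomposition A z ((∑ g ∈ t, Multiset.replicate (a g) g) + r) := by
  refine ⟨?_, fun g hg => ?_⟩
  · simp only [Multiset.sum_add, Multiset.sum_sum, Multiset.sum_replicate, hr.1, add_sub_cancel]
  rcases Multiset.mem_add.mp hg with hg | hg
  · obtain ⟨h, hh, hg⟩ := Multiset.mem_sum.mp hg
    exact Multiset.eq_of_mem_replicate hg ▸ ht h hh
  · exact ⟨(hr.2 g hg).1, (hr.2 g hg).2.trans hy.sub_left⟩

theorem IsGraverDecomposition.exists_sparse_rat_combination {z : C → ℤ} {s : Multiset (C → ℤ)}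
    (hs : IsGraverDecomposition A z s) :
    ∃ t : Finset (C → ℤ), ∃ c : (C → ℤ) → ℚ, t.card ≤ Fintype.card C ∧
      (∀ g ∈ t, InGraverBasis A g ∧ IsConformal g z) ∧ (∀ g ∈ t, 0 ≤ c g) ∧
      ∑ g ∈ t, c g • castVec g = castVec z ∧ (Multiset.card s : ℚ) ≤ ∑ g ∈ t, c g := by
  classical
  have hs_good : ∀ g ∈ s.toFinset, InGraverBasis A g ∧ IsConformal g z :=
    fun g hg => hs.2 g (Multiset.mem_toFinset.mp hg)
  obtain ⟨t, hts, c, hli, hc, hsum, hobj⟩ :=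
    exists_linearIndepOn_sum_smul_eq (signWeight z) (v := castVec) (c := fun g => (s.count g : ℚ))
      (fun g hg => one_pos.trans_le <|
        (hs_good g hg).2.one_le_signWeight_castVec (hs_good g hg).1.2.1)
      (fun _ _ => Nat.cast_nonneg _)
  refine ⟨t, c, by simpa using hli.linearIndependent.fintype_card_le_finrank,
    fun g hg => hs_good g (hts hg), hc, hsum.trans hs.sum_count_smul_castVec, ?_⟩
  rw [← Multiset.toFinset_sum_count_eq]
  exact_mod_cast hobj

theorem exists_graver_pairs {z : C → ℤ} (hz : IsCycle A z) :
    ∃ P : Multiset (ℕ × (C → ℤ)), Multiset.card P ≤ 2 * Fintype.card C ∧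
      (P.map fun p => (p.1 : ℤ) • p.2).sum = z ∧
      ∀ p ∈ P, InGraverBasis A p.2 ∧ IsConformal p.2 z := by
  obtain ⟨s, hs, hmax⟩ := exists_isGraverDecomposition_card_maximal hz
  obtain ⟨t, c, ht_card, ht_good, hc, hcz, hs_le⟩ := hs.exists_sparse_rat_combination
  set y := ∑ g ∈ t, ⌊c g⌋₊ • g
  have hy : IsConformal y z := isConformal_sum_floor_smul (fun g hg => (ht_good g hg).2) hc hcz
  have hzy : IsCycle A (z - y) :=
    isCycle_iff_mem_ker.mpr <| sub_mem hz <| sum_mem fun g hg =>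
      Submodule.smul_of_tower_mem _ _ (isCycle_iff_mem_ker.mp (ht_good g hg).1.1)
  obtain ⟨r, hr⟩ := exists_isGraverDecomposition hzy
  have hr_card : Multiset.card r ≤ t.card := by
    refine le_card_of_sum_floor_add_le (N := Multiset.card s) hs_le ?_
    simpa only [Multiset.card_add, Multiset.card_sum, Multiset.card_replicate] using
      hmax _ (isGraverDecomposition_add_sum_replicate ht_good hy hr)
  refine ⟨t.val.map (fun g => (⌊c g⌋₊, g)) + r.map (fun g => (1, g)), ?_, ?_, ?_⟩
  · simp only [Multiset.card_add, Multiset.card_map, card_val]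
    omega
  · rw [Multiset.map_add, Multiset.sum_add, Multiset.map_map, Multiset.map_map]
    simp only [Function.comp_def, natCast_zsmul, one_smul, Multiset.map_id',
      hr.1, Finset.sum_map_val]
    exact add_sub_cancel y z
  · simp only [Multiset.mem_add, Multiset.mem_map, mem_val]
    rintro p (⟨g, hg, rfl⟩ | ⟨g, hg, rfl⟩)
    · exact ht_good g hg
    · exact ⟨(hr.2 g hg).1, (hr.2 g hg).2.trans hy.sub_left⟩

end Main

/-- Every cycle `z` of `A ∈ ℤ^{m×n}` is a nonnegative integer combination
`z = Σ_{i=1}^{2n} λᵢ gᵢ`, where each `gᵢ` is either zero or a Graver basis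
element of `A` sign-compatible with `z`. -/
theorem cycle_graver_decomposition (m n : ℕ) (A : Matrix (Fin m) (Fin n) ℤ)
    (z : Fin n → ℤ) (hz : IsCycle A z) :
    ∃ (lam : Fin (2 * n) → ℕ) (g : Fin (2 * n) → Fin n → ℤ),
      z = ∑ i, (lam i : ℤ) • g i ∧
      ∀ i, g i = 0 ∨ (InGraverBasis A (g i) ∧ SignCompat (g i) z) := by
  obtain ⟨P, hP_card, hP_sum, hP⟩ := exists_graver_pairs hz
  obtain ⟨f, hf, hf_sum⟩ := P.exists_fin_sum_map_eq (by simpa using hP_card) (0, 0)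
    (fun p => (p.1 : ℤ) • p.2) (by simp)
  refine ⟨fun i => (f i).1, fun i => (f i).2, (hf_sum.trans hP_sum).symm, fun i => ?_⟩
  rcases hf i with h | h
  · exact Or.inr ⟨(hP _ h).1, (hP _ h).2.signCompat⟩
  · exact Or.inl (by simp [h])
end
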